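/- arXiv:math/0601337 — 6 statements merged into one kernel-verified Lean document; each statement's English description precedes it below -/
import Mathlib

section
/- Let a ∈ ℤ³ be primitive and let x ∈ ℂ³. The following are equivalent: (i) Im(α(x)·conj(β(x))) > 0 for some oriented basis (α,β) of H(a); (ii) Im(α(x)·conj(β(x))) > 0 for every oriented basis (α,β) of H(a); (iii) there is an oriented basis (α,β) of H(a) with β(x) ≠ 0 and Im(α(x)/β(x)) > 0; (iv) there is an oriented basis (α,β) of H(a) with α(x) ≠ 0 and Im(β(x)/α(x)) < 0. -/
namespace EGG

/-- Integer vectors in `ℤ³`. -/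
abbrev V : Type := Fin 3 → ℤ

/-- gcd of the three coordinates. -/
def gcd3 (v : V) : ℕ := Nat.gcd (Nat.gcd (v 0).natAbs (v 1).natAbs) (v 2).natAbs

/-- A vector of `ℤ³` is primitive if it is nonzero and the gcd of its coordinates is 1. -/
def Primitive (a : V) : Prop := a ≠ 0 ∧ gcd3 a = 1

/-- Cross product of integer vectors. -/
def cross (a b : V) : V :=
  ![a 1 * b 2 - a 2 * b 1, a 2 * b 0 - a 0 * b 2, a 0 * b 1 - a 1 * b 0]

/-- Dot product of integer vectors. -/
def dotZ (α a : V) : ℤ := α 0 * a 0 + α 1 * a 1 + α 2 * a 2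

/-- Dot product of a rational vector with an integer vector. -/
def dotQ (α : Fin 3 → ℚ) (a : V) : ℚ := α 0 * (a 0 : ℚ) + α 1 * (a 1 : ℚ) + α 2 * (a 2 : ℚ)

/-- Dot product of a real vector with an integer vector. -/
def dotR (l : Fin 3 → ℝ) (a : V) : ℝ := l 0 * (a 0 : ℝ) + l 1 * (a 1 : ℝ) + l 2 * (a 2 : ℝ)

/-- The pairing `α(x) = α₁x₁+α₂x₂+α₃x₃` of a rational vector with a complex vector. -/
noncomputable def pairQ (α : Fin 3 → ℚ) (x : Fin 3 → ℂ) : ℂ :=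
  (α 0 : ℂ) * x 0 + (α 1 : ℂ) * x 1 + (α 2 : ℂ) * x 2

/-- The pairing `α(x) = α₁x₁+α₂x₂+α₃x₃` of an integer vector with a complex vector. -/
noncomputable def pairZ (α : V) (x : Fin 3 → ℂ) : ℂ :=
  (α 0 : ℂ) * x 0 + (α 1 : ℂ) * x 1 + (α 2 : ℂ) * x 2

/-- The canonical map `ℤ³ → ℚ³`. -/
def toQ (a : V) : Fin 3 → ℚ := fun i => (a i : ℚ)

/-- Determinant of the 3×3 matrix with rows `α, β, δ`. -/
def det3Q (α β δ : Fin 3 → ℚ) : ℚ := Matrix.det (Matrix.of ![α, β, δ])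

/-- `(α, β)` is an oriented basis of the plane `H(a) = {α : α·a = 0}`. -/
def IsOrientedBasis (a : V) (α β : Fin 3 → ℚ) : Prop :=
  dotQ α a = 0 ∧ dotQ β a = 0 ∧
  LinearIndependent ℚ ![α, β] ∧
  (∀ δ : Fin 3 → ℚ, dotQ δ a = 0 → ∃ p q : ℚ, δ = p • α + q • β) ∧
  (∀ δ : Fin 3 → ℚ, 0 < dotQ δ a → 0 < det3Q α β δ)

/-- The domain `U⁺_a ⊆ ℂ³`. -/
noncomputable def UPlus (a : V) : Set (Fin 3 → ℂ) :=
  {x | ∃ α β : Fin 3 → ℚ, IsOrientedBasis a α β ∧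
    0 < (pairQ α x * (starRingEnd ℂ) (pairQ β x)).im}

/-- `γ` is the direction vector of the wedge `(a,b)`: `γ` is primitive and
`a × b = s • γ` for some integer `s ≥ 1` (the modulus). -/
def IsDirVec (a b γ : V) : Prop :=
  Primitive γ ∧ ∃ s : ℤ, 1 ≤ s ∧ cross a b = s • γ

/-- `C₊₋(a,b) = {δ ∈ ℤ³ : δ·a > 0, δ·b ≤ 0}`. -/
def Cpm (a b : V) : Set V := {δ | 0 < dotZ δ a ∧ dotZ δ b ≤ 0}

/-- `C₋₊(a,b) = {δ ∈ ℤ³ : δ·a ≤ 0, δ·b > 0}`. -/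
def Cmp (a b : V) : Set V := {δ | dotZ δ a ≤ 0 ∧ 0 < dotZ δ b}

/-- The factor `1 - e^{-2πi(δ(x)-w)/γ(x)}` appearing in the numerator of `Γ_{a,b}`. -/
noncomputable def gammaFacP (γ : V) (x : Fin 3 → ℂ) (w : ℂ) (δ : V) : ℂ :=
  1 - Complex.exp (-(2 * (Real.pi : ℂ) * Complex.I) * (pairZ δ x - w) / pairZ γ x)

/-- The factor `1 - e^{2πi(δ(x)-w)/γ(x)}` appearing in the denominator of `Γ_{a,b}`. -/
noncomputable def gammaFacM (γ : V) (x : Fin 3 → ℂ) (w : ℂ) (δ : V) : ℂ :=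
  1 - Complex.exp ((2 * (Real.pi : ℂ) * Complex.I) * (pairZ δ x - w) / pairZ γ x)

/-- The gamma function `Γ_{a,b}(w,x)` of the wedge `(a,b)` with direction vector `γ`:
the products run over the sets `C₊₋(a,b)/ℤγ` and `C₋₊(a,b)/ℤγ`; each factor is evaluated
on the chosen representative `Quotient.out q` of the class `q` (the factors are constant
on classes modulo `ℤγ`). -/
noncomputable def GammaWedge (a b γ : V) (w : ℂ) (x : Fin 3 → ℂ) : ℂ :=
  if a = b then 1 else
    (∏' q : (QuotientAddGroup.mk '' Cpm a b : Set (V ⧸ AddSubgroup.zmultiples γ)),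
      gammaFacP γ x w (Quotient.out (q : V ⧸ AddSubgroup.zmultiples γ))) /
    (∏' q : (QuotientAddGroup.mk '' Cmp a b : Set (V ⧸ AddSubgroup.zmultiples γ)),
      gammaFacM γ x w (Quotient.out (q : V ⧸ AddSubgroup.zmultiples γ)))

/-- The theta function `θ₀(z,τ)`, for `Im τ > 0`. -/
noncomputable def theta0 (z τ : ℂ) : ℂ :=
  ∏' j : ℕ, ((1 - Complex.exp (2 * (Real.pi : ℂ) * Complex.I * (((j : ℂ) + 1) * τ - z))) *
    (1 - Complex.exp (2 * (Real.pi : ℂ) * Complex.I * ((j : ℂ) * τ + z))))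

/-- The elliptic gamma function `Γ(z,τ,σ)`, for `Im τ > 0` and `Im σ > 0`. -/
noncomputable def ellGamma (z τ σ : ℂ) : ℂ :=
  (∏' p : ℕ × ℕ, (1 - Complex.exp (2 * (Real.pi : ℂ) * Complex.I *
      (((p.1 : ℂ) + 1) * τ + ((p.2 : ℂ) + 1) * σ - z)))) /
  (∏' p : ℕ × ℕ, (1 - Complex.exp (2 * (Real.pi : ℂ) * Complex.I *
      ((p.1 : ℂ) * τ + (p.2 : ℂ) * σ + z))))

/-- The elliptic gamma function `Γ̃(z,τ,σ)` in the domain `Im τ < 0 < Im σ`. -/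
noncomputable def ellGammaTilde (z τ σ : ℂ) : ℂ :=
  (∏' p : ℕ × ℕ, (1 - Complex.exp (2 * (Real.pi : ℂ) * Complex.I *
      (z - ((p.1 : ℂ) + 1) * τ + (p.2 : ℂ) * σ)))) /
  (∏' p : ℕ × ℕ, (1 - Complex.exp (2 * (Real.pi : ℂ) * Complex.I *
      (-z - (p.1 : ℂ) * τ + ((p.2 : ℂ) + 1) * σ))))

/-- The polynomial `P₂`. -/
noncomputable def P2 (w x₁ x₂ : ℂ) : ℂ :=
  (w ^ 2 - (x₁ + x₂) * w + (x₁ ^ 2 + x₂ ^ 2 + 3 * x₁ * x₂) / 6) / (x₁ * x₂)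

/-- The Bernoulli polynomial `P₃ = B₃,₃`. -/
noncomputable def P3 (w x₁ x₂ x₃ : ℂ) : ℂ :=
  w ^ 3 / (x₁ * x₂ * x₃) - (3 * (x₁ + x₂ + x₃) / (2 * (x₁ * x₂ * x₃))) * w ^ 2
    + ((x₁ ^ 2 + x₂ ^ 2 + x₃ ^ 2 + 3 * x₁ * x₂ + 3 * x₂ * x₃ + 3 * x₁ * x₃)
        / (2 * (x₁ * x₂ * x₃))) * w
    - (1 / 4) * (x₁ + x₂ + x₃) * (1 / x₁ + 1 / x₂ + 1 / x₃)

/-- The real polynomial `R₃ = B₂,₃`. -/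
noncomputable def R3 (ζ t s : ℝ) : ℝ :=
  ζ ^ 3 / (t * s) - (3 / 2) * (1 / t + 1 / s) * ζ ^ 2
    + (t / (2 * s) + s / (2 * t) + 3 / 2) * ζ - (t + s) / 4

/-- The hermitian weight `h₂(z,τ)` for the theta bundle. -/
noncomputable def h2 (z τ : ℂ) : ℝ :=
  Real.exp (-2 * Real.pi * z.im ^ 2 / τ.im + 2 * Real.pi * (z - τ / 6).im)

/-- The hermitian weight `h₃(z,τ,σ)`. -/
noncomputable def h3 (z τ σ : ℂ) : ℝ :=
  Real.exp (-(2 * Real.pi / 3) * R3 z.im τ.im σ.im)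

/-- The finite product of theta functions `Δ` with parameters `A₁ = α₁(x)`, `A₂ = α₂(x)`,
`A₃ = α₃(x)` and first framing coordinate `m = μ(a)`:
`∏_{j=0}^{m-1} θ₀((w+jA₁)/A₃, A₂/A₃)` for `m ≥ 0` and
`(∏_{j=m}^{-1} θ₀((w+jA₁)/A₃, A₂/A₃))⁻¹` for `m < 0`. -/
noncomputable def DeltaInt (w A₁ A₂ A₃ : ℂ) (m : ℤ) : ℂ :=
  if 0 ≤ m then
    ∏ j ∈ Finset.range m.toNat, theta0 ((w + (j : ℂ) * A₁) / A₃) (A₂ / A₃)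
  else
    (∏ j ∈ Finset.range (-m).toNat, theta0 ((w - ((j : ℂ) + 1) * A₁) / A₃) (A₂ / A₃))⁻¹

end EGG

/-!
Any two oriented bases of `H(a)` differ by a change of basis of positive determinant: test the
orientation condition against `δ = a`, for which `det(α, β, a)` scales by that determinant. The
quantity `Im(α(x) · conj β(x))` scales by the same determinant, so its sign does not depend on the
oriented basis, and (i) ⇔ (ii) once one oriented basis is exhibited. Conditions (iii) and (iv) are
(i) rewritten through `Im(A / B) = Im(A · conj B) / |B|²`.
-/

open ComplexConjugate

namespace Complex

lemma im_add_mul_conj_add_mul (p q r s : ℝ) (A B : ℂ) :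
    ((p * A + q * B) * conj (r * A + s * B)).im = (p * s - q * r) * (A * conj B).im := by
  simp only [map_add, map_mul, conj_ofReal, mul_im, mul_re, add_re, add_im, ofReal_re, ofReal_im,
    conj_re, conj_im]
  ring

lemma im_div_eq_im_mul_conj_div (A B : ℂ) : (A / B).im = (A * conj B).im / normSq B := by
  rw [div_eq_mul_inv, inv_def, ← mul_assoc, im_mul_ofReal, div_eq_mul_inv]

lemma im_mul_conj_pos_iff_im_div_pos (A B : ℂ) :
    0 < (A * conj B).im ↔ B ≠ 0 ∧ 0 < (A / B).im := by
  by_cases hB : B = 0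
  · simp [hB]
  · rw [im_div_eq_im_mul_conj_div, div_pos_iff_of_pos_right (normSq_pos.mpr hB)]
    exact (and_iff_right hB).symm

lemma im_mul_conj_pos_iff_im_div_neg (A B : ℂ) :
    0 < (A * conj B).im ↔ A ≠ 0 ∧ (B / A).im < 0 := by
  by_cases hA : A = 0
  · simp [hA]
  · have hconj : B * conj A = conj (A * conj B) := by rw [map_mul, conj_conj, mul_comm]
    rw [im_div_eq_im_mul_conj_div, div_lt_iff₀ (normSq_pos.mpr hA), zero_mul, hconj, conj_im,
      neg_lt_zero]
    exact (and_iff_right hA).symm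

end Complex

namespace EGG

lemma dotQ_toQ_self_pos {a : V} (ha : a ≠ 0) : 0 < dotQ (toQ a) a := by
  obtain ⟨i, hi⟩ := Function.ne_iff.mp ha
  have hai : (a i : ℚ) ≠ 0 := by exact_mod_cast hi
  have hsum : dotQ (toQ a) a = ∑ j, (a j : ℚ) * a j := by
    simp [dotQ, toQ, Fin.sum_univ_three]
  rw [hsum]
  exact Finset.sum_pos' (fun j _ => mul_self_nonneg _) ⟨i, Finset.mem_univ _, mul_self_pos.mpr hai⟩

lemma det3Q_apply (α β δ : Fin 3 → ℚ) : det3Q α β δ =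
    α 0 * (β 1 * δ 2 - β 2 * δ 1) - α 1 * (β 0 * δ 2 - β 2 * δ 0) + α 2 * (β 0 * δ 1 - β 1 * δ 0) := by
  rw [det3Q, Matrix.det_fin_three]
  simp only [Matrix.of_apply, Matrix.cons_val_zero, Matrix.cons_val_one, Matrix.cons_val_two,
    Matrix.head_cons, Matrix.tail_cons]
  ring

lemma det3Q_swap (α β δ : Fin 3 → ℚ) : det3Q β α δ = -det3Q α β δ := by
  simp only [det3Q_apply]
  ring

lemma det3Q_add_smul (p q r s : ℚ) (α β δ : Fin 3 → ℚ) :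
    det3Q (p • α + q • β) (r • α + s • β) δ = (p * s - q * r) * det3Q α β δ := by
  simp only [det3Q_apply, Pi.add_apply, Pi.smul_apply, smul_eq_mul]
  ring

/-- Cramer's rule in dimension three. -/
lemma det3Q_smul_eq (α β γ δ : Fin 3 → ℚ) :
    det3Q α β γ • δ = det3Q δ β γ • α + det3Q α δ γ • β + det3Q α β δ • γ := by
  funext i
  fin_cases i <;>
    simp only [det3Q_apply, Pi.add_apply, Pi.smul_apply, smul_eq_mul, Fin.zero_eta, Fin.mk_one,
      Fin.reduceFinMk] <;>
    ring

lemma pairQ_add_smul (p q : ℚ) (α β : Fin 3 → ℚ) (x : Fin 3 → ℂ) :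
    pairQ (p • α + q • β) x = p * pairQ α x + q * pairQ β x := by
  simp only [pairQ, Pi.add_apply, Pi.smul_apply, smul_eq_mul, Rat.cast_add, Rat.cast_mul]
  ring

/-- The hypothesis `hdet` says that the cross product `α × β` equals `c • a`. -/
lemma isOrientedBasis_of_det3Q_eq {a : V} (ha : a ≠ 0) {α β : Fin 3 → ℚ} {c : ℚ} (hc : 0 < c)
    (hdet : ∀ δ, det3Q α β δ = c * dotQ δ a) :
    IsOrientedBasis a α β := by
  have hD : det3Q α β (toQ a) ≠ 0 := by
    rw [hdet]
    exact (mul_pos hc (dotQ_toQ_self_pos ha)).ne'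
  have hα : dotQ α a = 0 :=
    (mul_eq_zero.mp ((hdet α).symm.trans (by rw [det3Q_apply]; ring))).resolve_left hc.ne'
  have hβ : dotQ β a = 0 :=
    (mul_eq_zero.mp ((hdet β).symm.trans (by rw [det3Q_apply]; ring))).resolve_left hc.ne'
  refine ⟨hα, hβ, LinearIndependent.pair_iff.mpr fun s t hst => ⟨?_, ?_⟩, fun δ hδ => ?_,
    fun δ hδ => by rw [hdet]; exact mul_pos hc hδ⟩
  · have h := det3Q_add_smul s t 0 1 α β (toQ a)
    rw [hst, zero_smul, one_smul, zero_add, mul_one, mul_zero, sub_zero] at h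
    exact (mul_eq_zero.mp (h.symm.trans (by simp [det3Q_apply]))).resolve_right hD
  · have h := det3Q_add_smul 1 0 s t α β (toQ a)
    rw [hst, zero_smul, one_smul, add_zero, one_mul, zero_mul, sub_zero] at h
    exact (mul_eq_zero.mp (h.symm.trans (by simp [det3Q_apply]))).resolve_right hD
  · refine ⟨det3Q δ β (toQ a) / det3Q α β (toQ a), det3Q α δ (toQ a) / det3Q α β (toQ a), ?_⟩
    have h := det3Q_smul_eq α β (toQ a) δ
    rw [hdet δ, hδ, mul_zero, zero_smul, add_zero] at h
    rw [div_eq_inv_mul, div_eq_inv_mul, mul_smul, mul_smul, ← smul_add, ← h, smul_smul,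
      inv_mul_cancel₀ hD, one_smul]

lemma exists_isOrientedBasis_of_det3Q_eq {a : V} (ha : a ≠ 0) {α β : Fin 3 → ℚ} {c : ℚ}
    (hc : c ≠ 0) (hdet : ∀ δ, det3Q α β δ = c * dotQ δ a) :
    ∃ α β, IsOrientedBasis a α β := by
  rcases hc.lt_or_gt with hneg | hpos
  · refine ⟨β, α, isOrientedBasis_of_det3Q_eq ha (neg_pos.mpr hneg) fun δ => ?_⟩
    rw [det3Q_swap, hdet, neg_mul]
  · exact ⟨α, β, isOrientedBasis_of_det3Q_eq ha hpos hdet⟩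

open Matrix in
lemma exists_isOrientedBasis {a : V} (ha : a ≠ 0) : ∃ α β, IsOrientedBasis a α β := by
  have hcoord : (a 0 : ℚ) ≠ 0 ∨ (a 1 : ℚ) ≠ 0 ∨ (a 2 : ℚ) ≠ 0 := by
    contrapose! ha
    funext i
    fin_cases i <;> simp_all
  -- `α` and `β` are cross products of `a` with two standard basis vectors, so `α × β = a i • a`.
  rcases hcoord with hai | hai | hai
  · refine exists_isOrientedBasis_of_det3Q_eq ha (α := ![-(a 1 : ℚ), a 0, 0])
      (β := ![-(a 2 : ℚ), 0, a 0]) hai fun δ => ?_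
    simp only [det3Q_apply, dotQ, cons_val_zero, cons_val_one, cons_val_two, head_cons, tail_cons]
    ring
  · refine exists_isOrientedBasis_of_det3Q_eq ha (α := ![0, -(a 2 : ℚ), a 1])
      (β := ![a 1, -(a 0 : ℚ), 0]) hai fun δ => ?_
    simp only [det3Q_apply, dotQ, cons_val_zero, cons_val_one, cons_val_two, head_cons, tail_cons]
    ring
  · refine exists_isOrientedBasis_of_det3Q_eq ha (α := ![a 2, 0, -(a 0 : ℚ)])
      (β := ![0, a 2, -(a 1 : ℚ)]) hai fun δ => ?_
    simp only [det3Q_apply, dotQ, cons_val_zero, cons_val_one, cons_val_two, head_cons, tail_cons]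
    ring

lemma IsOrientedBasis.exists_smul_add_smul_and_det_pos {a : V} (ha : a ≠ 0)
    {α β α' β' : Fin 3 → ℚ} (hb : IsOrientedBasis a α β) (hb' : IsOrientedBasis a α' β') :
    ∃ p q r s : ℚ, α' = p • α + q • β ∧ β' = r • α + s • β ∧ 0 < p * s - q * r := by
  obtain ⟨p, q, rfl⟩ := hb.2.2.2.1 α' hb'.1
  obtain ⟨r, s, rfl⟩ := hb.2.2.2.1 β' hb'.2.1
  have hpos := dotQ_toQ_self_pos ha
  have h' := hb'.2.2.2.2 _ hpos
  rw [det3Q_add_smul] at h'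
  exact ⟨p, q, r, s, rfl, rfl, pos_of_mul_pos_left h' (hb.2.2.2.2 _ hpos).le⟩

lemma IsOrientedBasis.im_pairQ_mul_conj_pos {a : V} (ha : a ≠ 0) {α β α' β' : Fin 3 → ℚ}
    (hb : IsOrientedBasis a α β) (hb' : IsOrientedBasis a α' β') {x : Fin 3 → ℂ}
    (hx : 0 < (pairQ α x * conj (pairQ β x)).im) :
    0 < (pairQ α' x * conj (pairQ β' x)).im := by
  obtain ⟨p, q, r, s, rfl, rfl, hdet⟩ := hb.exists_smul_add_smul_and_det_pos ha hb'
  simp only [pairQ_add_smul, ← Complex.ofReal_ratCast, Complex.im_add_mul_conj_add_mul]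
  exact mul_pos (by exact_mod_cast hdet) hx

/-- the four equivalent characterizations of the domain `U⁺_a`. -/
theorem statement0 (a : V) (ha : Primitive a) (x : Fin 3 → ℂ) :
    ((∃ α β : Fin 3 → ℚ, IsOrientedBasis a α β ∧
        0 < (pairQ α x * (starRingEnd ℂ) (pairQ β x)).im) ↔
      (∀ α β : Fin 3 → ℚ, IsOrientedBasis a α β →
        0 < (pairQ α x * (starRingEnd ℂ) (pairQ β x)).im)) ∧
    ((∃ α β : Fin 3 → ℚ, IsOrientedBasis a α β ∧
        0 < (pairQ α x * (starRingEnd ℂ) (pairQ β x)).im) ↔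
      (∃ α β : Fin 3 → ℚ, IsOrientedBasis a α β ∧
        pairQ β x ≠ 0 ∧ 0 < (pairQ α x / pairQ β x).im)) ∧
    ((∃ α β : Fin 3 → ℚ, IsOrientedBasis a α β ∧
        0 < (pairQ α x * (starRingEnd ℂ) (pairQ β x)).im) ↔
      (∃ α β : Fin 3 → ℚ, IsOrientedBasis a α β ∧
        pairQ α x ≠ 0 ∧ (pairQ β x / pairQ α x).im < 0)) := by
  obtain ⟨α₀, β₀, hb₀⟩ := exists_isOrientedBasis ha.1
  refine ⟨⟨fun ⟨α, β, hb, hx⟩ α' β' hb' => hb.im_pairQ_mul_conj_pos ha.1 hb' hx,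
    fun h => ⟨α₀, β₀, hb₀, h α₀ β₀ hb₀⟩⟩, ?_, ?_⟩
  · simp only [Complex.im_mul_conj_pos_iff_im_div_pos]
  · simp only [Complex.im_mul_conj_pos_iff_im_div_neg]

end EGG
end

section
/- Let a, b, c ∈ ℤ³ be primitive. The intersection U⁺_a ∩ U⁺_b ∩ U⁺_c is nonempty if and only if a, b, c lie strictly on one side of some plane through the origin, i.e. if and only if there exists λ ∈ ℝ³ with λ·a > 0, λ·b > 0 and λ·c > 0. -/
namespace EGG

/-- Auxiliary: cross product of rational vectors. -/
def crossQ (α β : Fin 3 → ℚ) : Fin 3 → ℚ :=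
  ![α 1 * β 2 - α 2 * β 1, α 2 * β 0 - α 0 * β 2, α 0 * β 1 - α 1 * β 0]

/-- Auxiliary: cross product of real vectors. -/
def crossR (u v : Fin 3 → ℝ) : Fin 3 → ℝ :=
  ![u 1 * v 2 - u 2 * v 1, u 2 * v 0 - u 0 * v 2, u 0 * v 1 - u 1 * v 0]

/-- Auxiliary: dot product of rational vectors. -/
def dotQQ (α β : Fin 3 → ℚ) : ℚ := α 0 * β 0 + α 1 * β 1 + α 2 * β 2

/-- Auxiliary: dot product of real vectors. -/
def dotRR (u v : Fin 3 → ℝ) : ℝ := u 0 * v 0 + u 1 * v 1 + u 2 * v 2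

lemma det3Q_eq' (α β δ : Fin 3 → ℚ) : det3Q α β δ = dotQQ (crossQ α β) δ := by
  simp [det3Q, dotQQ, crossQ, Matrix.det_fin_three]; ring

lemma im_pair (α β : Fin 3 → ℚ) (x : Fin 3 → ℂ) :
    (pairQ α x * (starRingEnd ℂ) (pairQ β x)).im =
      dotRR (fun i => (crossQ α β i : ℝ)) (crossR (fun i => (x i).im) (fun i => (x i).re)) := by
  simp [pairQ, crossQ, crossR, dotRR, Complex.mul_im, Complex.add_im, Complex.add_re,
    Complex.mul_re]
  ring

lemma cramer3 (α β γ δ : Fin 3 → ℚ) (m : Fin 3) :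
    dotQQ (crossQ α β) γ * δ m =
      dotQQ (crossQ δ β) γ * α m + dotQQ (crossQ α δ) γ * β m + dotQQ (crossQ α β) δ * γ m := by
  fin_cases m <;> simp [dotQQ, crossQ] <;> ring

lemma crossQ_smul_add (s t : ℚ) (α β γ : Fin 3 → ℚ) :
    crossQ (s • α + t • β) γ = s • crossQ α γ + t • crossQ β γ := by
  funext m; fin_cases m <;>
    simp [crossQ, Pi.add_apply, Pi.smul_apply, smul_eq_mul] <;> ring

lemma crossQ_self (α : Fin 3 → ℚ) : crossQ α α = 0 := by
  funext m; fin_cases m <;> simp [crossQ] <;> ring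

lemma crossQ_anticomm (α β : Fin 3 → ℚ) : crossQ β α = -crossQ α β := by
  funext m; fin_cases m <;> simp [crossQ] <;> ring

lemma dotQQ_comm (u v : Fin 3 → ℚ) : dotQQ u v = dotQQ v u := by
  unfold dotQQ; ring

lemma dotQQ_toQ (δ : Fin 3 → ℚ) (a : V) : dotQQ δ (toQ a) = dotQ δ a := rfl

lemma dotQQ_smul_sub_left (s t : ℚ) (u v w : Fin 3 → ℚ) :
    dotQQ (s • u - t • v) w = s * dotQQ u w - t * dotQQ v w := by
  simp [dotQQ, Pi.sub_apply, Pi.smul_apply, smul_eq_mul]; ring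

lemma dotQQ_smul_add_left (s t : ℚ) (u v w : Fin 3 → ℚ) :
    dotQQ (s • u + t • v) w = s * dotQQ u w + t * dotQQ v w := by
  simp [dotQQ, Pi.add_apply, Pi.smul_apply, smul_eq_mul]; ring

lemma dotQQ_pos_self (a : V) (ha : a ≠ 0) : 0 < dotQQ (toQ a) (toQ a) := by
  obtain ⟨k, hk⟩ : ∃ k, a k ≠ 0 := by
    by_contra h; push_neg at h; exact ha (funext h)
  have hk' : (a k : ℚ) ≠ 0 := Int.cast_ne_zero.mpr hk
  have hsq : 0 < (a k : ℚ) ^ 2 := by positivity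
  fin_cases k <;>
    · simp only [dotQQ, toQ]
      simp only [Fin.isValue, Fin.reduceFinMk] at hsq
      nlinarith [sq_nonneg (a 0 : ℚ), sq_nonneg (a 1 : ℚ), sq_nonneg (a 2 : ℚ)]

lemma eq_zero_of_dotQQ_self (v : Fin 3 → ℚ) (h : dotQQ v v = 0) : v = 0 := by
  unfold dotQQ at h
  have h0 : v 0 = 0 := by nlinarith [mul_self_nonneg (v 0), mul_self_nonneg (v 1), mul_self_nonneg (v 2)]
  have h1 : v 1 = 0 := by nlinarith [mul_self_nonneg (v 0), mul_self_nonneg (v 1), mul_self_nonneg (v 2)]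
  have h2 : v 2 = 0 := by nlinarith [mul_self_nonneg (v 0), mul_self_nonneg (v 1), mul_self_nonneg (v 2)]
  funext m
  fin_cases m <;> simp only [Fin.isValue, Fin.reduceFinMk, Fin.zero_eta, Fin.mk_one, Pi.zero_apply] <;>
    first | exact h0 | exact h1 | exact h2

/-- Any oriented basis of `H(a)` has cross product a positive multiple of `a`. -/
lemma cross_of_oriented (a : V) (ha : a ≠ 0) (α β : Fin 3 → ℚ)
    (h : IsOrientedBasis a α β) : ∃ t : ℚ, 0 < t ∧ crossQ α β = t • toQ a := by
  obtain ⟨hα, hβ, _hind, hspan, hor⟩ := h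
  have hApos : 0 < dotQQ (toQ a) (toQ a) := dotQQ_pos_self a ha
  have hspos : 0 < dotQQ (crossQ α β) (toQ a) := by
    have := hor (toQ a) hApos
    rwa [det3Q_eq'] at this
  set A : ℚ := dotQQ (toQ a) (toQ a) with hA
  set s : ℚ := dotQQ (crossQ α β) (toQ a) with hs
  set d : Fin 3 → ℚ := A • crossQ α β - s • toQ a with hd
  have hda : dotQ d a = 0 := by
    rw [← dotQQ_toQ, hd, dotQQ_smul_sub_left, hs, hA]; ring
  obtain ⟨p, q, hpq⟩ := hspan d hda
  have hcα : dotQQ α (crossQ α β) = 0 := by simp [dotQQ, crossQ]; ring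
  have hcβ : dotQQ β (crossQ α β) = 0 := by simp [dotQQ, crossQ]; ring
  have hdc : dotQQ d (crossQ α β) = 0 := by
    rw [hpq, dotQQ_smul_add_left, hcα, hcβ]; ring
  have hdd : dotQQ d d = 0 := by
    conv_lhs => rw [hd]
    rw [dotQQ_smul_sub_left, dotQQ_comm _ d, dotQQ_comm _ d, hdc, dotQQ_toQ, hda]
    ring
  have hd0 : d = 0 := eq_zero_of_dotQQ_self d hdd
  refine ⟨s / A, div_pos hspos hApos, ?_⟩
  funext m
  have := congrFun hd0 m
  rw [hd, Pi.sub_apply, Pi.smul_apply, Pi.smul_apply, Pi.zero_apply, smul_eq_mul, smul_eq_mul,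
    sub_eq_zero] at this
  rw [Pi.smul_apply, smul_eq_mul]
  have hAne : A ≠ 0 := ne_of_gt hApos
  field_simp
  linarith [this]

/-- Converse: a pair orthogonal to `a` whose cross product is a positive multiple of `a`
is an oriented basis. -/
lemma isOrientedBasis_of_cross (a : V) (ha : a ≠ 0) (α β : Fin 3 → ℚ) (t : ℚ) (ht : 0 < t)
    (hα : dotQ α a = 0) (hβ : dotQ β a = 0) (hc : crossQ α β = t • toQ a) :
    IsOrientedBasis a α β := by
  have hApos : 0 < dotQQ (toQ a) (toQ a) := dotQQ_pos_self a ha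
  have hcδ : ∀ δ : Fin 3 → ℚ, dotQQ (crossQ α β) δ = t * dotQ δ a := by
    intro δ
    rw [hc, dotQQ_comm, ← dotQQ_toQ]
    simp [dotQQ, Pi.smul_apply, smul_eq_mul]; ring
  have hD : dotQQ (crossQ α β) (toQ a) = t * dotQQ (toQ a) (toQ a) := by
    rw [hcδ, dotQQ_toQ]
  have hDpos : 0 < dotQQ (crossQ α β) (toQ a) := by rw [hD]; exact mul_pos ht hApos
  have hDne : dotQQ (crossQ α β) (toQ a) ≠ 0 := ne_of_gt hDpos
  refine ⟨hα, hβ, ?_, ?_, ?_⟩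
  · rw [LinearIndependent.pair_iff]
    intro s u hsu
    have h1 : crossQ (s • α + u • β) β = (s * t) • toQ a := by
      rw [crossQ_smul_add, hc, crossQ_self, smul_smul]
      simp
    have h2 : crossQ (s • α + u • β) α = (-(u * t)) • toQ a := by
      rw [crossQ_smul_add, crossQ_self, crossQ_anticomm α β, hc]
      module
    rw [hsu] at h1 h2
    have hz : crossQ (0 : Fin 3 → ℚ) β = 0 := by
      funext m; fin_cases m <;> simp [crossQ]
    have hz' : crossQ (0 : Fin 3 → ℚ) α = 0 := by
      funext m; fin_cases m <;> simp [crossQ]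
    rw [hz] at h1; rw [hz'] at h2
    have e1 : (0 : ℚ) = s * t * dotQQ (toQ a) (toQ a) := by
      have := congrArg (fun w => dotQQ w (toQ a)) h1
      simpa [dotQQ, Pi.smul_apply, smul_eq_mul, mul_add, mul_assoc, mul_comm, mul_left_comm]
        using this
    have e2 : (0 : ℚ) = -(u * t) * dotQQ (toQ a) (toQ a) := by
      have := congrArg (fun w => dotQQ w (toQ a)) h2
      simpa [dotQQ, Pi.smul_apply, smul_eq_mul, mul_add, mul_assoc, mul_comm, mul_left_comm]
        using this
    constructor
    · by_contra hs0
      have : s * t * dotQQ (toQ a) (toQ a) ≠ 0 := by positivity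
      exact this e1.symm
    · by_contra hu0
      have : -(u * t) * dotQQ (toQ a) (toQ a) ≠ 0 := by
        have : u * t ≠ 0 := mul_ne_zero hu0 (ne_of_gt ht)
        intro h; apply this; nlinarith [hApos]
      exact this e2.symm
  · intro δ hδ
    refine ⟨dotQQ (crossQ δ β) (toQ a) / dotQQ (crossQ α β) (toQ a),
            dotQQ (crossQ α δ) (toQ a) / dotQQ (crossQ α β) (toQ a), ?_⟩
    funext m
    have hcr := cramer3 α β (toQ a) δ m
    have hz : dotQQ (crossQ α β) δ = 0 := by rw [hcδ, hδ]; ring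
    rw [hz] at hcr
    rw [Pi.add_apply, Pi.smul_apply, Pi.smul_apply, smul_eq_mul, smul_eq_mul]
    field_simp
    linarith [hcr]
  · intro δ hδ
    rw [det3Q_eq', hcδ]
    exact mul_pos ht hδ

/-- Existence of an oriented basis with explicit cross product. -/
lemma exists_oriented (a : V) (ha : a ≠ 0) :
    ∃ (α β : Fin 3 → ℚ) (t : ℚ), 0 < t ∧ crossQ α β = t • toQ a ∧ IsOrientedBasis a α β := by
  obtain ⟨k, hk⟩ : ∃ k, a k ≠ 0 := by
    by_contra h; push_neg at h; exact ha (funext h)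
  have key : ∃ (α β : Fin 3 → ℚ) (t : ℚ), t ≠ 0 ∧ dotQ α a = 0 ∧ dotQ β a = 0 ∧
      crossQ α β = t • toQ a := by
    fin_cases k
    · refine ⟨![-(a 1 : ℚ), (a 0 : ℚ), 0], ![-(a 2 : ℚ), 0, (a 0 : ℚ)], (a 0 : ℚ),
        Int.cast_ne_zero.mpr hk, by simp [dotQ]; ring, by simp [dotQ]; ring, ?_⟩
      funext m; fin_cases m <;> simp [crossQ, toQ, Pi.smul_apply, smul_eq_mul] <;> ring
    · refine ⟨![0, -(a 2 : ℚ), (a 1 : ℚ)], ![(a 1 : ℚ), -(a 0 : ℚ), 0], (a 1 : ℚ),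
        Int.cast_ne_zero.mpr hk, by simp [dotQ]; ring, by simp [dotQ]; ring, ?_⟩
      funext m; fin_cases m <;> simp [crossQ, toQ, Pi.smul_apply, smul_eq_mul] <;> ring
    · refine ⟨![(a 2 : ℚ), 0, -(a 0 : ℚ)], ![0, (a 2 : ℚ), -(a 1 : ℚ)], (a 2 : ℚ),
        Int.cast_ne_zero.mpr hk, by simp [dotQ]; ring, by simp [dotQ]; ring, ?_⟩
      funext m; fin_cases m <;> simp [crossQ, toQ, Pi.smul_apply, smul_eq_mul] <;> ring
  obtain ⟨α, β, t, htne, hα, hβ, hc⟩ := key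
  rcases lt_or_gt_of_ne htne with hneg | hpos
  · refine ⟨β, α, -t, by linarith, ?_, ?_⟩
    · rw [crossQ_anticomm, hc]; module
    · exact isOrientedBasis_of_cross a ha β α (-t) (by linarith) hβ hα
        (by rw [crossQ_anticomm, hc]; module)
  · exact ⟨α, β, t, hpos, hc, isOrientedBasis_of_cross a ha α β t hpos hα hβ hc⟩

lemma dotRR_pos_self (v : Fin 3 → ℝ) (hv : v ≠ 0) : 0 < dotRR v v := by
  obtain ⟨k, hk⟩ : ∃ k, v k ≠ 0 := by
    by_contra h; push_neg at h; exact hv (funext h)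
  have hsq : 0 < v k ^ 2 := by positivity
  fin_cases k <;>
    · simp only [dotRR]
      simp only [Fin.isValue, Fin.reduceFinMk] at hsq
      nlinarith [sq_nonneg (v 0), sq_nonneg (v 1), sq_nonneg (v 2)]

lemma crossR_triple (l v : Fin 3 → ℝ) :
    crossR v (crossR l v) = dotRR v v • l - dotRR l v • v := by
  funext m; fin_cases m <;>
    simp [crossR, dotRR, Pi.sub_apply, Pi.smul_apply, smul_eq_mul] <;> ring

lemma crossR_smul (c : ℝ) (v w : Fin 3 → ℝ) : crossR v (c • w) = c • crossR v w := by
  funext m; fin_cases m <;>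
    simp [crossR, Pi.smul_apply, smul_eq_mul] <;> ring

lemma exists_uv (l : Fin 3 → ℝ) (hl : l ≠ 0) : ∃ u v : Fin 3 → ℝ, crossR v u = l := by
  have main : ∀ v : Fin 3 → ℝ, v ≠ 0 → dotRR l v = 0 → ∃ u, crossR v u = l := by
    intro v hv hlv
    have hvv : 0 < dotRR v v := dotRR_pos_self v hv
    refine ⟨(dotRR v v)⁻¹ • crossR l v, ?_⟩
    rw [crossR_smul, crossR_triple, hlv]
    funext m
    simp only [Pi.smul_apply, Pi.sub_apply, smul_eq_mul, zero_mul, Pi.zero_apply,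
      zero_smul, sub_zero]
    field_simp
  by_cases h12 : l 1 = 0 ∧ l 2 = 0
  · have h0 : l 0 ≠ 0 := by
      intro h; apply hl; funext m
      fin_cases m <;> simp [h, h12.1, h12.2]
    obtain ⟨u, hu⟩ := main (crossR l ![0, 1, 0])
      (by
        intro h
        apply h0
        have := congrFun h 2
        simpa [crossR] using this)
      (by simp [dotRR, crossR]; ring)
    exact ⟨u, _, hu⟩
  · obtain ⟨u, hu⟩ := main (crossR l ![1, 0, 0])
      (by
        intro h
        apply h12
        have h2 := congrFun h 2
        have h1 := congrFun h 1
        simp [crossR] at h1 h2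
        exact ⟨by linarith, h1⟩)
      (by simp [dotRR, crossR]; ring)
    exact ⟨u, _, hu⟩

lemma dotRR_cast_smul (t : ℚ) (a : V) (w : Fin 3 → ℝ) :
    dotRR (fun i => ((t • toQ a) i : ℝ)) w = (t : ℝ) * dotR w a := by
  simp only [dotRR, dotR, toQ, Pi.smul_apply, smul_eq_mul]
  push_cast; ring

lemma key_fwd (a : V) (ha : a ≠ 0) (x : Fin 3 → ℂ) (hx : x ∈ UPlus a) :
    0 < dotR (crossR (fun i => (x i).im) (fun i => (x i).re)) a := by
  obtain ⟨α, β, hOB, him⟩ := hx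
  obtain ⟨t, ht, hc⟩ := cross_of_oriented a ha α β hOB
  rw [im_pair, hc, dotRR_cast_smul] at him
  have ht' : (0 : ℝ) < (t : ℝ) := by exact_mod_cast ht
  rcases mul_pos_iff.mp him with ⟨_, h⟩ | ⟨h1, _⟩
  · exact h
  · linarith

lemma key_bwd (a : V) (ha : a ≠ 0) (u v l : Fin 3 → ℝ) (huv : crossR v u = l)
    (hpos : 0 < dotR l a) : (fun i => (⟨u i, v i⟩ : ℂ)) ∈ UPlus a := by
  obtain ⟨α, β, t, ht, hc, hOB⟩ := exists_oriented a ha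
  refine ⟨α, β, hOB, ?_⟩
  rw [im_pair]
  show 0 < dotRR (fun i => ((crossQ α β) i : ℝ)) (crossR v u)
  rw [hc, dotRR_cast_smul, huv]
  have ht' : (0 : ℝ) < (t : ℝ) := by exact_mod_cast ht
  exact mul_pos ht' hpos

/-- `U⁺_a ∩ U⁺_b ∩ U⁺_c ≠ ∅` iff `a, b, c` lie strictly on one side of a
plane through the origin. -/
theorem statement1 (a b c : V) (ha : Primitive a) (hb : Primitive b) (hc : Primitive c) :
    (UPlus a ∩ UPlus b ∩ UPlus c).Nonempty ↔
      ∃ l : Fin 3 → ℝ, 0 < dotR l a ∧ 0 < dotR l b ∧ 0 < dotR l c := by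
  constructor
  · rintro ⟨x, ⟨hxa, hxb⟩, hxc⟩
    exact ⟨crossR (fun i => (x i).im) (fun i => (x i).re),
      key_fwd a ha.1 x hxa, key_fwd b hb.1 x hxb, key_fwd c hc.1 x hxc⟩
  · rintro ⟨l, hla, hlb, hlc⟩
    have hl : l ≠ 0 := by
      intro h
      rw [h] at hla
      simp [dotR] at hla
    obtain ⟨u, v, huv⟩ := exists_uv l hl
    exact ⟨fun i => (⟨u i, v i⟩ : ℂ),
      ⟨⟨key_bwd a ha.1 u v l huv hla, key_bwd b hb.1 u v l huv hlb⟩,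
        key_bwd c hc.1 u v l huv hlc⟩⟩

end EGG
end

section
/- Let a, b ∈ ℤ³ be primitive and ℚ-linearly independent. Then there exist g ∈ SL(3,ℤ) and integers r, s with s ≥ 1, 0 ≤ r < s and gcd(r,s) = 1 such that g·a = e₁ and g·b = r·e₁ + s·e₂. Moreover the pair (r,s) with these properties is unique (it does not depend on the choice of g), and s = mod(a,b). -/
namespace EGG

/-- `(g, r, s)` puts the wedge `(a,b)` in normal form: `g·a = e₁`, `g·b = r·e₁ + s·e₂`,
with `s ≥ 1`, `0 ≤ r < s` and `gcd(r,s) = 1`. -/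
def NormalForm (a b : V) (g : Matrix.SpecialLinearGroup (Fin 3) ℤ) (r s : ℤ) : Prop :=
  1 ≤ s ∧ 0 ≤ r ∧ r < s ∧ Int.gcd r s = 1 ∧
  (g : Matrix (Fin 3) (Fin 3) ℤ).mulVec a = ![1, 0, 0] ∧
  (g : Matrix (Fin 3) (Fin 3) ℤ).mulVec b = r • ![1, 0, 0] + s • ![0, 1, 0]

/-!
Bezout moves on two coordinates at a time carry the primitive vector `a` to `e₁`; the stabiliser
of `e₁` then brings the last two coordinates of `g • b` to `(s, 0)` with `s` their gcd, and a shear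
reduces the first coordinate modulo `s`. Independence of `a, b` forces `s ≠ 0`, and since the gcd
of the coordinates is an `SL(3, ℤ)`-invariant, primitivity of `b` gives `gcd(r, s) = 1`.

As `(g a) × (g b) = g⁻ᵀ (a × b)`, the gcd of the coordinates of `a × b` is invariant too, and on
the normal form it is read off from `e₁ × (r, s, 0) = (0, 0, s)`. Two normal forms thus share `s`,
and they differ by an element fixing `e₁`, which moves `r` only by a multiple of `s`.
-/

open Matrix
open scoped MatrixGroups

local notation "e₁" => (![1, 0, 0] : V)

lemma coe_mulVec_eq_smul (g : SL(3, ℤ)) (v : V) : (g : Matrix (Fin 3) (Fin 3) ℤ) *ᵥ v = g • v :=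
  rfl

lemma smul_e₁_add_smul_e₂ (r s : ℤ) : r • e₁ + s • ![0, 1, 0] = ![r, s, 0] := by
  ext i; fin_cases i <;> simp

lemma normalForm_iff {a b : V} {g : SL(3, ℤ)} {r s : ℤ} :
    NormalForm a b g r s ↔
      1 ≤ s ∧ 0 ≤ r ∧ r < s ∧ Int.gcd r s = 1 ∧ g • a = e₁ ∧ g • b = ![r, s, 0] := by
  simp only [NormalForm, coe_mulVec_eq_smul, smul_e₁_add_smul_e₂]

lemma dvd_gcd3_iff {c : ℤ} {v : V} : c ∣ gcd3 v ↔ ∀ i, c ∣ v i := by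
  simp [gcd3, Int.dvd_natCast, Nat.dvd_gcd_iff, Int.natAbs_dvd_natAbs, Fin.forall_fin_succ,
    and_assoc]

lemma gcd3_vecCons (x y z : ℤ) : gcd3 ![x, y, z] = Int.gcd (Int.gcd x y) z := by
  simp [gcd3, Int.gcd]

lemma gcd3_dvd_gcd3_mulVec (M : Matrix (Fin 3) (Fin 3) ℤ) (v : V) : gcd3 v ∣ gcd3 (M *ᵥ v) :=
  Int.natCast_dvd_natCast.mp <| dvd_gcd3_iff.mpr fun i =>
    show _ ∣ ∑ j, M i j * v j from Finset.dvd_sum fun j _ => (dvd_gcd3_iff.mp dvd_rfl j).mul_left _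

lemma gcd3_smul (g : SL(3, ℤ)) (v : V) : gcd3 (g • v) = gcd3 v :=
  Nat.dvd_antisymm
    (by simpa only [coe_mulVec_eq_smul, inv_smul_smul] using gcd3_dvd_gcd3_mulVec (↑g⁻¹) (g • v))
    (gcd3_dvd_gcd3_mulVec g v)

lemma cross_eq_crossProduct (a b : V) : cross a b = a ⨯₃ b := rfl

lemma crossProduct_mulVec {R : Type*} [CommRing R] (M : Matrix (Fin 3) (Fin 3) R)
    (u v : Fin 3 → R) : (M *ᵥ u) ⨯₃ (M *ᵥ v) = (adjugate M)ᵀ *ᵥ (u ⨯₃ v) := by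
  ext i
  fin_cases i <;>
    simp [cross_apply, adjugate_fin_three, mulVec, dotProduct, Fin.sum_univ_three] <;> ring

lemma cross_smul (g : SL(3, ℤ)) (a b : V) :
    cross (g • a) (g • b) = (g⁻¹).transpose • cross a b := by
  simp only [← coe_mulVec_eq_smul, cross_eq_crossProduct, crossProduct_mulVec,
    SpecialLinearGroup.coe_transpose]
  rfl

lemma gcd3_cross_smul (g : SL(3, ℤ)) (a b : V) :
    gcd3 (cross (g • a) (g • b)) = gcd3 (cross a b) := by
  rw [cross_smul, gcd3_smul]

lemma gcd3_cross_eq_of_normalForm {a b : V} {g : SL(3, ℤ)} {r s : ℤ}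
    (h : NormalForm a b g r s) : (gcd3 (cross a b) : ℤ) = s := by
  obtain ⟨hs, -, -, -, hga, hgb⟩ := normalForm_iff.mp h
  have hcross : cross e₁ ![r, s, 0] = ![0, 0, s] := by
    ext i; fin_cases i <;> simp [cross]
  rw [← gcd3_cross_smul g, hga, hgb, hcross, gcd3_vecCons]
  simp [abs_of_pos (show 0 < s by omega)]

lemma smul_apply_zero_modEq {g : SL(3, ℤ)} (hg : g • e₁ = e₁) (r s : ℤ) :
    (g • ![r, s, 0]) 0 ≡ r [ZMOD s] := by
  have hg00 : g 0 0 = 1 := by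
    simpa [← coe_mulVec_eq_smul, mulVec, dotProduct, Fin.sum_univ_three] using congrFun hg 0
  rw [Int.modEq_iff_dvd]
  exact ⟨-g 0 1, by simp [← coe_mulVec_eq_smul, mulVec, dotProduct, Fin.sum_univ_three, hg00]; ring⟩

lemma normalForm_unique {a b : V} {g g' : SL(3, ℤ)} {r s r' s' : ℤ}
    (h : NormalForm a b g r s) (h' : NormalForm a b g' r' s') : r = r' ∧ s = s' := by
  have hs : s = s' := by
    rw [← gcd3_cross_eq_of_normalForm h, gcd3_cross_eq_of_normalForm h']
  subst hs
  obtain ⟨-, hr, hrs, -, hga, hgb⟩ := normalForm_iff.mp h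
  obtain ⟨-, hr', hrs', -, hga', hgb'⟩ := normalForm_iff.mp h'
  have he₁ : (g' * g⁻¹) • e₁ = e₁ := by rw [mul_smul, ← hga, inv_smul_smul, hga', hga]
  have hb : (g' * g⁻¹) • ![r, s, 0] = ![r', s, 0] := by rw [mul_smul, ← hgb, inv_smul_smul, hgb']
  have hmod : r' ≡ r [ZMOD s] := by simpa [hb] using smul_apply_zero_modEq he₁ r s
  unfold Int.ModEq at hmod
  rw [Int.emod_eq_of_lt hr hrs, Int.emod_eq_of_lt hr' hrs'] at hmod
  exact ⟨hmod.symm, rfl⟩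

lemma exists_bezout_matrix (x y : ℤ) :
    ∃ p q u w : ℤ, p * w - q * u = 1 ∧ p * x + q * y = Int.gcd x y ∧ u * x + w * y = 0 := by
  by_cases hd : Int.gcd x y = 0
  · obtain ⟨rfl, rfl⟩ := Int.gcd_eq_zero_iff.mp hd
    exact ⟨1, 0, 0, 1, by simp⟩
  obtain ⟨x', hx⟩ := Int.gcd_dvd_left x y
  obtain ⟨y', hy⟩ := Int.gcd_dvd_right x y
  have hbez := Int.gcd_eq_gcd_ab x y
  refine ⟨Int.gcdA x y, Int.gcdB x y, -y', x', ?_, by rw [hbez]; ring,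
    by linear_combination (-y') * hx + x' * hy⟩
  apply mul_left_cancel₀ (Int.natCast_ne_zero.mpr hd)
  linear_combination (-Int.gcdA x y) * hx - Int.gcdB x y * hy - hbez

lemma exists_smul_eq_gcd_snd (v : V) :
    ∃ g : SL(3, ℤ), g • e₁ = e₁ ∧ g • v = ![v 0, Int.gcd (v 1) (v 2), 0] := by
  obtain ⟨p, q, u, w, hdet, hd, h0⟩ := exists_bezout_matrix (v 1) (v 2)
  obtain ⟨g, hg⟩ : ∃ g : SL(3, ℤ), ↑g = !![1, 0, 0; 0, p, q; 0, u, w] :=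
    ⟨⟨_, by simp [det_fin_three]; linarith⟩, rfl⟩
  refine ⟨g, ?_, ?_⟩ <;> ext i <;> fin_cases i <;>
    simp [← coe_mulVec_eq_smul, hg, mulVec, dotProduct, Fin.sum_univ_three, hd, h0]

lemma exists_smul_eq_gcd_fst (x y : ℤ) :
    ∃ g : SL(3, ℤ), g • ![x, y, 0] = ![(Int.gcd x y : ℤ), 0, 0] := by
  obtain ⟨p, q, u, w, hdet, hd, h0⟩ := exists_bezout_matrix x y
  obtain ⟨g, hg⟩ : ∃ g : SL(3, ℤ), ↑g = !![p, q, 0; u, w, 0; 0, 0, 1] :=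
    ⟨⟨_, by simp [det_fin_three]; linarith⟩, rfl⟩
  refine ⟨g, ?_⟩
  ext i
  fin_cases i <;> simp [← coe_mulVec_eq_smul, hg, mulVec, dotProduct, Fin.sum_univ_three, hd, h0]

lemma exists_smul_eq_e₁ {a : V} (ha : Primitive a) : ∃ g : SL(3, ℤ), g • a = e₁ := by
  obtain ⟨g₁, -, hg₁⟩ := exists_smul_eq_gcd_snd a
  obtain ⟨g₂, hg₂⟩ := exists_smul_eq_gcd_fst (a 0) (Int.gcd (a 1) (a 2))
  refine ⟨g₂ * g₁, ?_⟩
  have hgcd : Int.gcd (a 0) (Int.gcd (a 1) (a 2)) = 1 := by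
    simpa [gcd3, Int.gcd, Nat.gcd_assoc] using ha.2
  rw [mul_smul, hg₁, hg₂, hgcd, Nat.cast_one]

lemma exists_smul_eq_emod (t s : ℤ) :
    ∃ g : SL(3, ℤ), g • e₁ = e₁ ∧ g • ![t, s, 0] = ![t % s, s, 0] := by
  refine ⟨SpecialLinearGroup.transvection (i := 0) (j := 1) (by decide) (-(t / s)), ?_, ?_⟩ <;>
    ext i <;> fin_cases i <;>
    simp [← coe_mulVec_eq_smul, SpecialLinearGroup.transvection_coe, mulVec,
      dotProduct, Fin.sum_univ_three, single_apply, Int.emod_def, sub_eq_add_neg, mul_comm]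

lemma ne_smul_of_linearIndependent {a b : V} (hab : LinearIndependent ℚ ![toQ a, toQ b]) (t : ℤ) :
    b ≠ t • a := by
  rintro rfl
  have := LinearIndependent.pair_iff.mp hab t (-1) (by ext i; simp [toQ])
  norm_num at this

lemma exists_normalForm {a b : V} (ha : Primitive a) (hb : Primitive b)
    (hab : LinearIndependent ℚ ![toQ a, toQ b]) :
    ∃ (g : SL(3, ℤ)) (r s : ℤ), NormalForm a b g r s := by
  obtain ⟨g₁, hga₁⟩ := exists_smul_eq_e₁ ha
  obtain ⟨g₂, hge₂, hgb₂⟩ := exists_smul_eq_gcd_snd (g₁ • b)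
  set t := (g₁ • b) 0
  set s : ℤ := (Int.gcd ((g₁ • b) 1) ((g₁ • b) 2) : ℤ)
  have hs : 0 < s := by
    refine lt_of_le_of_ne (by positivity : 0 ≤ s) fun hs => ne_smul_of_linearIndependent hab t ?_
    apply MulAction.injective (g₂ * g₁)
    dsimp only
    rw [smul_comm, mul_smul, mul_smul, hga₁, hge₂, hgb₂, ← hs]
    ext i; fin_cases i <;> simp
  obtain ⟨g₃, hge₃, hgb₃⟩ := exists_smul_eq_emod t s
  have hga : (g₃ * g₂ * g₁) • a = e₁ := by rw [mul_smul, mul_smul, hga₁, hge₂, hge₃]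
  have hgb : (g₃ * g₂ * g₁) • b = ![t % s, s, 0] := by rw [mul_smul, mul_smul, hgb₂, hgb₃]
  have hcop : Int.gcd (t % s) s = 1 := by
    simpa [hgb, gcd3_vecCons, hb.2] using gcd3_smul (g₃ * g₂ * g₁) b
  exact ⟨g₃ * g₂ * g₁, t % s, s, normalForm_iff.mpr
    ⟨hs, Int.emod_nonneg t hs.ne', Int.emod_lt_of_pos t hs, hcop, hga, hgb⟩⟩

/-- normal form of a wedge under `SL(3,ℤ)`, uniqueness of `(r,s)`, and
`s = mod(a,b)`. -/
theorem statement2 (a b : V) (ha : Primitive a) (hb : Primitive b)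
    (hab : LinearIndependent ℚ ![toQ a, toQ b]) :
    (∃ (g : Matrix.SpecialLinearGroup (Fin 3) ℤ) (r s : ℤ), NormalForm a b g r s) ∧
    (∀ (g g' : Matrix.SpecialLinearGroup (Fin 3) ℤ) (r s r' s' : ℤ),
      NormalForm a b g r s → NormalForm a b g' r' s' → r = r' ∧ s = s') ∧
    (∀ (g : Matrix.SpecialLinearGroup (Fin 3) ℤ) (r s : ℤ),
      NormalForm a b g r s → s = (gcd3 (cross a b) : ℤ)) :=
  ⟨exists_normalForm ha hb hab, fun _ _ _ _ _ _ h h' => normalForm_unique h h',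
    fun _ _ _ h => (gcd3_cross_eq_of_normalForm h).symm⟩

end EGG
end

section
/- Let a, b ∈ ℤ³ be primitive and ℚ-linearly independent, let γ = γ_{a,b}, and let x ∈ U⁺_a ∩ U⁺_b. Then γ(x) ≠ 0, and for every w ∈ ℂ: the family ([δ] ∈ C₊₋(a,b)/ℤγ) ↦ (1 − e^{−2πi(δ(x)−w)/γ(x)}) and the family ([δ] ∈ C₋₊(a,b)/ℤγ) ↦ (1 − e^{2πi(δ(x)−w)/γ(x)}) are both multipliable; each of the two infinite products is a holomorphic function of w on all of ℂ; the first product vanishes at w if and only if w = δ(x) + n·γ(x) for some δ ∈ C₊₋(a,b) and n ∈ ℤ, and the second vanishes at w if and only if w = δ(x) + n·γ(x) for some δ ∈ C₋₊(a,b) and n ∈ ℤ. -/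
namespace EGG

/-!
Write `K(δ) = e^{-2πiδ(x)/γ(x)}`, so that each numerator factor is `1 - K(δ)·e^{2πiw/γ(x)}`.
Expanding `δ` in the frame `(b × γ, γ × a, γ)` gives `Im(δ(x)/γ(x)) = (δ·a)t + (δ·b)u`, and
`t < 0 < u` on `U⁺_a ∩ U⁺_b` because `det(γ × a, γ, a) = |γ × a|²` and `det(γ × b, γ, b)` are
positive. As `γ` is primitive, `δ ↦ (δ·a, δ·b)` is injective modulo `ℤγ`, so over
`C₊₋(a,b)/ℤγ` the moduli `|K(δ)|` are dominated by a double geometric series. The product then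
converges absolutely and locally uniformly in `w`: it is entire and vanishes exactly where a
factor does. The products over `C₋₊(a,b)` are those over `C₊₋(b,a)` for the direction `-γ`.
-/

open Complex ComplexConjugate Real

section VectorAlgebra

lemma dotZ_add_left (u v a : V) : dotZ (u + v) a = dotZ u a + dotZ v a := by
  simp only [dotZ, Pi.add_apply]; ring

lemma dotZ_smul_left (k : ℤ) (v a : V) : dotZ (k • v) a = k * dotZ v a := by
  simp only [dotZ, Pi.smul_apply, smul_eq_mul]; ring

lemma dotZ_neg_left (v a : V) : dotZ (-v) a = -dotZ v a := by
  simp only [dotZ, Pi.neg_apply]; ring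

lemma pairZ_add (u v : V) (x : Fin 3 → ℂ) : pairZ (u + v) x = pairZ u x + pairZ v x := by
  simp only [pairZ, Pi.add_apply]; push_cast; ring

lemma pairZ_smul (k : ℤ) (v : V) (x : Fin 3 → ℂ) :
    pairZ (k • v) x = k * pairZ v x := by
  simp only [pairZ, Pi.smul_apply, smul_eq_mul]; push_cast; ring

lemma pairZ_neg (v : V) (x : Fin 3 → ℂ) : pairZ (-v) x = -pairZ v x := by
  simp only [pairZ, Pi.neg_apply]; push_cast; ring

lemma dotZ_cross_left (a b : V) : dotZ (cross a b) a = 0 := by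
  simp only [dotZ, cross, Matrix.cons_val_zero, Matrix.cons_val_one, Matrix.cons_val]; ring

lemma dotZ_cross_right (a b : V) : dotZ (cross a b) b = 0 := by
  simp only [dotZ, cross, Matrix.cons_val_zero, Matrix.cons_val_one, Matrix.cons_val]; ring

lemma cross_swap (a b : V) : cross b a = -cross a b := by
  ext i; fin_cases i <;> simp [cross] <;> ring

lemma cross_cofactor (a b c δ : V) :
    dotZ (cross a b) c • δ =
      dotZ δ a • cross b c + dotZ δ b • cross c a + dotZ δ c • cross a b := by
  ext i; fin_cases i <;> simp [dotZ, cross] <;> ring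

lemma dotZ_self_pos {v : V} (hv : v ≠ 0) : 0 < dotZ v v := by
  have h : dotZ v v = v ⬝ᵥ v := by simp [dotZ, dotProduct, Fin.sum_univ_three]
  rw [h]
  refine lt_of_le_of_ne ?_ (Ne.symm (dotProduct_self_eq_zero.not.mpr hv))
  simp only [dotProduct]
  exact Finset.sum_nonneg fun i _ ↦ mul_self_nonneg (v i)

lemma dvd_of_dvd_mul_of_gcd3_eq_one {γ : V} (hγ : gcd3 γ = 1) {d c : ℤ}
    (h : ∀ i, d ∣ c * γ i) : d ∣ c := by
  have hg : Int.gcd (Int.gcd (γ 0) (γ 1) : ℤ) (γ 2) = 1 := hγ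
  have h1 := Int.gcd_eq_gcd_ab (Int.gcd (γ 0) (γ 1) : ℤ) (γ 2)
  have h2 := Int.gcd_eq_gcd_ab (γ 0) (γ 1)
  rw [hg, Nat.cast_one] at h1
  have hc : c = (c * γ 0 * Int.gcdA (γ 0) (γ 1) + c * γ 1 * Int.gcdB (γ 0) (γ 1))
      * Int.gcdA (Int.gcd (γ 0) (γ 1)) (γ 2) + c * γ 2 * Int.gcdB (Int.gcd (γ 0) (γ 1)) (γ 2) := by
    linear_combination c * h1 + c * Int.gcdA (Int.gcd (γ 0) (γ 1)) (γ 2) * h2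
  rw [hc]
  exact dvd_add (dvd_mul_of_dvd_left (dvd_add ((h 0).mul_right _) ((h 1).mul_right _)) _)
    ((h 2).mul_right _)

end VectorAlgebra

section UPlus

lemma dotQ_toQ (v a : V) : dotQ (toQ v) a = dotZ v a := by
  simp only [dotQ, toQ, dotZ]; push_cast; ring

lemma pairQ_toQ (v : V) (x : Fin 3 → ℂ) : pairQ (toQ v) x = pairZ v x := by
  simp only [pairQ, pairZ, toQ]; norm_cast

lemma det3Q_toQ_cross (v a : V) :
    det3Q (toQ (cross v a)) (toQ v) (toQ a) = dotZ v v * dotZ a a - dotZ v a ^ 2 := by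
  simp only [det3Q, Matrix.det_fin_three, Matrix.of_apply, Matrix.cons_val', Matrix.cons_val_zero,
    Matrix.cons_val_one, Matrix.cons_val, Matrix.cons_val_fin_one, toQ, dotZ, cross]
  push_cast
  ring

lemma det3Q_combo (α β δ : Fin 3 → ℚ) (p q r t : ℚ) :
    det3Q (p • α + q • β) (r • α + t • β) δ = (p * t - q * r) * det3Q α β δ := by
  simp only [det3Q, Matrix.det_fin_three, Matrix.of_apply, Matrix.cons_val', Matrix.cons_val_zero,
    Matrix.cons_val_one, Matrix.cons_val, Matrix.cons_val_fin_one, Pi.add_apply, Pi.smul_apply,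
    smul_eq_mul]
  ring

lemma pairQ_combo (α β : Fin 3 → ℚ) (p q : ℚ) (x : Fin 3 → ℂ) :
    pairQ (p • α + q • β) x = p * pairQ α x + q * pairQ β x := by
  simp only [pairQ, Pi.add_apply, Pi.smul_apply, smul_eq_mul]; push_cast; ring

lemma im_combo_mul_conj_combo (p q r t : ℝ) (z w : ℂ) :
    ((p * z + q * w) * conj (r * z + t * w)).im = (p * t - q * r) * (z * conj w).im := by
  simp only [map_add, map_mul, conj_ofReal, mul_im, mul_re, add_re, add_im, ofReal_re,
    ofReal_im, conj_re, conj_im]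
  ring

/-- Under a change of basis of `H(a)`, both `det(v, w, a)` and `Im(v(x) conj w(x))` scale by the
same determinant. -/
theorem im_pairQ_mul_conj_pos {a : V} (ha : a ≠ 0) {x : Fin 3 → ℂ} (hx : x ∈ UPlus a)
    {v w : Fin 3 → ℚ} (hv : dotQ v a = 0) (hw : dotQ w a = 0) (hvw : 0 < det3Q v w (toQ a)) :
    0 < (pairQ v x * conj (pairQ w x)).im := by
  obtain ⟨α, β, ⟨-, -, -, hspan, hpos⟩, hαβ⟩ := hx
  obtain ⟨p, q, rfl⟩ := hspan v hv
  obtain ⟨r, t, rfl⟩ := hspan w hw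
  have ha' : 0 < det3Q α β (toQ a) :=
    hpos _ (by rw [dotQ_toQ]; exact_mod_cast dotZ_self_pos ha)
  rw [det3Q_combo] at hvw
  have hdet : (0 : ℝ) < p * t - q * r := by exact_mod_cast pos_of_mul_pos_left hvw ha'.le
  rw [pairQ_combo, pairQ_combo]
  have hcast (u : ℚ) : (u : ℂ) = ((u : ℝ) : ℂ) := rfl
  rw [hcast p, hcast q, hcast r, hcast t, im_combo_mul_conj_combo]
  exact mul_pos hdet hαβ

theorem im_pairZ_cross_div_pos {v a : V} (hv : v ≠ 0) (ha : a ≠ 0) (hva : dotZ v a = 0)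
    {x : Fin 3 → ℂ} (hx : x ∈ UPlus a) : 0 < (pairZ (cross v a) x / pairZ v x).im := by
  have hdet : 0 < det3Q (toQ (cross v a)) (toQ v) (toQ a) := by
    rw [det3Q_toQ_cross, hva]
    exact_mod_cast (by simpa using mul_pos (dotZ_self_pos hv) (dotZ_self_pos ha) :
      (0 : ℤ) < dotZ v v * dotZ a a - 0 ^ 2)
  have him := im_pairQ_mul_conj_pos ha hx (by rw [dotQ_toQ, dotZ_cross_right]; rfl)
    (by rw [dotQ_toQ, hva]; rfl) hdet
  rw [pairQ_toQ, pairQ_toQ] at him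
  have hnorm : 0 < normSq (pairZ v x) := by
    refine normSq_pos.mpr fun h ↦ ?_
    simp [h] at him
  rw [div_im]
  simp only [mul_im, conj_re, conj_im] at him
  rw [← sub_div]
  exact div_pos (by linarith) hnorm

end UPlus

section InfiniteProduct

variable {ι : Type*} {f : ι → ℂ}

lemma multipliable_one_sub (hf : Summable (‖f ·‖)) : Multipliable fun i ↦ 1 - f i := by
  simpa [sub_eq_add_neg] using
    multipliable_one_add_of_summable (f := fun i ↦ -f i) (by simpa using hf)

lemma tprod_one_sub_eq_zero_iff (hf : Summable (‖f ·‖)) :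
    ∏' i, (1 - f i) = 0 ↔ ∃ i, f i = 1 := by
  constructor
  · intro h
    by_contra! hne
    refine tprod_one_add_ne_zero_of_summable (f := fun i ↦ -f i) (fun i ↦ ?_) (by simpa using hf) ?_
    · rw [← sub_eq_add_neg, sub_ne_zero]; exact (hne i).symm
    · simpa [← sub_eq_add_neg] using h
  · rintro ⟨i, hi⟩
    exact tprod_of_exists_eq_zero ⟨i, by rw [hi, sub_self]⟩

lemma differentiable_tprod_one_sub_mul {K : ι → ℂ} (hK : Summable (‖K ·‖)) :
    Differentiable ℂ fun z ↦ ∏' i, (1 - K i * z) := by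
  intro z
  set R := ‖z‖ + 1
  have hprod : HasProdLocallyUniformlyOn (fun i z ↦ 1 + -(K i * z))
      (fun z ↦ ∏' i, (1 + -(K i * z))) (Metric.ball 0 R) := by
    refine hK.mul_right R |>.hasProdLocallyUniformlyOn_one_add Metric.isOpen_ball
      (.of_forall fun i w hw ↦ ?_) fun i ↦ by fun_prop
    rw [norm_neg, norm_mul]
    exact mul_le_mul_of_nonneg_left (mem_ball_zero_iff.mp hw).le (norm_nonneg _)
  have hdiff := hprod.differentiableOn (.of_forall fun s ↦ by fun_prop) Metric.isOpen_ball
  simp only [← sub_eq_add_neg] at hdiff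
  exact hdiff.differentiableAt (Metric.isOpen_ball.mem_nhds (by simp [R]))

end InfiniteProduct

lemma summable_exp_of_injective_quadrant {ι : Type*} {e : ι → ℤ × ℤ} (he : Function.Injective e)
    (hquad : ∀ i, 0 ≤ (e i).1 ∧ (e i).2 ≤ 0) {t u : ℝ} (ht : t < 0) (hu : 0 < u) :
    Summable fun i ↦ Real.exp ((e i).1 * t + (e i).2 * u) := by
  have hgeom : Summable fun p : ℕ × ℕ ↦ Real.exp t ^ p.1 * Real.exp (-u) ^ p.2 :=
    (summable_geometric_of_lt_one (Real.exp_pos t).le (Real.exp_lt_one_iff.mpr ht)).mul_of_nonneg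
      (summable_geometric_of_lt_one (Real.exp_pos _).le (Real.exp_lt_one_iff.mpr (by linarith)))
      (fun _ ↦ by positivity) (fun _ ↦ by positivity)
  have hinj : Function.Injective fun i ↦ ((e i).1.toNat, (-(e i).2).toNat) := by
    intro i j h
    simp only [Prod.mk.injEq] at h
    have := hquad i
    have := hquad j
    exact he (Prod.ext (by omega) (by omega))
  refine (hgeom.comp_injective hinj).congr fun i ↦ ?_
  obtain ⟨h1, h2⟩ := hquad i
  simp only [Function.comp_apply, ← Real.exp_nat_mul, ← Real.exp_add]
  congr 1
  have c1 : ((e i).1.toNat : ℝ) = (e i).1 := by exact_mod_cast Int.toNat_of_nonneg h1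
  have c2 : ((-(e i).2).toNat : ℝ) = -(e i).2 := by
    exact_mod_cast Int.toNat_of_nonneg (neg_nonneg.mpr h2)
  rw [c1, c2]
  ring

lemma _root_.QuotientAddGroup.out_mem_of_mem_image {G : Type*} [AddGroup G] {L : AddSubgroup G}
    {S : Set G} (hS : ∀ δ ∈ S, ∀ l ∈ L, δ + l ∈ S) {q : G ⧸ L}
    (hq : q ∈ QuotientAddGroup.mk '' S) : q.out ∈ S := by
  obtain ⟨δ, hδ, rfl⟩ := hq
  obtain ⟨l, hl⟩ := QuotientAddGroup.mk_out_eq_add (s := L) δ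
  exact hl ▸ hS δ hδ l l.2

lemma exists_out_eq_add_iff {γ : V} {S : Set V}
    (hS : ∀ δ ∈ S, ∀ l ∈ AddSubgroup.zmultiples γ, δ + l ∈ S) (x : Fin 3 → ℂ) (w : ℂ) :
    (∃ q : (QuotientAddGroup.mk '' S : Set (V ⧸ AddSubgroup.zmultiples γ)), ∃ n : ℤ,
        w = pairZ (q : V ⧸ AddSubgroup.zmultiples γ).out x + n * pairZ γ x) ↔
      ∃ δ ∈ S, ∃ n : ℤ, w = pairZ δ x + n * pairZ γ x := by
  constructor
  · rintro ⟨⟨q, hq⟩, n, rfl⟩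
    exact ⟨q.out, QuotientAddGroup.out_mem_of_mem_image hS hq, n, rfl⟩
  · rintro ⟨δ, hδ, n, rfl⟩
    obtain ⟨⟨_, k, rfl⟩, hout⟩ := QuotientAddGroup.mk_out_eq_add (s := AddSubgroup.zmultiples γ) δ
    refine ⟨⟨δ, δ, hδ, rfl⟩, n - k, ?_⟩
    rw [hout]
    simp only [pairZ_add, pairZ_smul]
    push_cast
    ring

lemma exists_eq_add_int_mul_neg_iff (d c w : ℂ) :
    (∃ n : ℤ, w = d + n * -c) ↔ ∃ n : ℤ, w = d + n * c :=
  ⟨fun ⟨n, h⟩ ↦ ⟨-n, by rw [h]; push_cast; ring⟩, fun ⟨n, h⟩ ↦ ⟨-n, by rw [h]; push_cast; ring⟩⟩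

namespace IsDirVec

variable {a b γ : V}

lemma dotZ_left (hγ : IsDirVec a b γ) : dotZ γ a = 0 := by
  obtain ⟨-, s, hs, hab⟩ := hγ
  have h := dotZ_cross_left a b
  rw [hab, dotZ_smul_left] at h
  exact (mul_eq_zero.mp h).resolve_left (by omega)

lemma dotZ_right (hγ : IsDirVec a b γ) : dotZ γ b = 0 := by
  obtain ⟨-, s, hs, hab⟩ := hγ
  have h := dotZ_cross_right a b
  rw [hab, dotZ_smul_left] at h
  exact (mul_eq_zero.mp h).resolve_left (by omega)

lemma swap (hγ : IsDirVec a b γ) : IsDirVec b a (-γ) := by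
  obtain ⟨⟨hγ0, hγ1⟩, s, hs, hab⟩ := hγ
  refine ⟨⟨neg_ne_zero.mpr hγ0, by simpa [gcd3] using hγ1⟩, s, hs, ?_⟩
  rw [cross_swap, hab, smul_neg]

lemma eq_zsmul_of_dotZ_eq_zero (hγ : IsDirVec a b γ) {η : V} (ha : dotZ η a = 0)
    (hb : dotZ η b = 0) : ∃ k : ℤ, η = k • γ := by
  obtain ⟨⟨hγ0, hγ1⟩, s, hs, hab⟩ := hγ
  have hγγ := dotZ_self_pos hγ0
  have hcof := cross_cofactor a b γ η
  simp only [ha, hb, zero_smul, zero_add, hab, dotZ_smul_left, smul_smul] at hcof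
  have hη (i : Fin 3) : dotZ γ γ * η i = dotZ η γ * γ i := by
    have := congrFun hcof i
    simp only [Pi.smul_apply, smul_eq_mul] at this
    exact mul_left_cancel₀ (show s ≠ 0 by omega) (by linear_combination this)
  obtain ⟨k, hk⟩ := dvd_of_dvd_mul_of_gcd3_eq_one hγ1 (d := dotZ γ γ) fun i ↦ ⟨η i, (hη i).symm⟩
  refine ⟨k, funext fun i ↦ mul_left_cancel₀ hγγ.ne' ?_⟩
  simp only [Pi.smul_apply, smul_eq_mul, hη, hk]; ring

lemma mk_eq_of_dotZ_eq (hγ : IsDirVec a b γ) {δ δ' : V} (ha : dotZ δ a = dotZ δ' a)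
    (hb : dotZ δ b = dotZ δ' b) : (δ : V ⧸ AddSubgroup.zmultiples γ) = δ' := by
  obtain ⟨k, hk⟩ := hγ.eq_zsmul_of_dotZ_eq_zero (η := -δ + δ')
    (by rw [dotZ_add_left, dotZ_neg_left, ha, neg_add_cancel])
    (by rw [dotZ_add_left, dotZ_neg_left, hb, neg_add_cancel])
  exact QuotientAddGroup.eq.mpr (hk ▸ AddSubgroup.zsmul_mem_zmultiples γ k)

lemma add_mem_Cpm (hγ : IsDirVec a b γ) :
    ∀ δ ∈ Cpm a b, ∀ l ∈ AddSubgroup.zmultiples γ, δ + l ∈ Cpm a b := by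
  rintro δ hδ _ ⟨k, rfl⟩
  simpa only [Cpm, Set.mem_ofPred_eq, dotZ_add_left, dotZ_smul_left, hγ.dotZ_left, hγ.dotZ_right,
    mul_zero, add_zero] using hδ

lemma pairZ_ne_zero (hγ : IsDirVec a b γ) (ha : a ≠ 0) {x : Fin 3 → ℂ} (hx : x ∈ UPlus a) :
    pairZ γ x ≠ 0 := fun h ↦ by
  simpa [h] using im_pairZ_cross_div_pos hγ.1.1 ha hγ.dotZ_left hx

theorem exists_im_pairZ_div_eq (hγ : IsDirVec a b γ) (ha : a ≠ 0) (hb : b ≠ 0)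
    {x : Fin 3 → ℂ} (hxa : x ∈ UPlus a) (hxb : x ∈ UPlus b) :
    ∃ t u : ℝ, t < 0 ∧ 0 < u ∧
      ∀ δ : V, (pairZ δ x / pairZ γ x).im = dotZ δ a * t + dotZ δ b * u := by
  have hσa := im_pairZ_cross_div_pos hγ.1.1 ha hγ.dotZ_left hxa
  have hσb := im_pairZ_cross_div_pos hγ.1.1 hb hγ.dotZ_right hxb
  have hγx := hγ.pairZ_ne_zero ha hxa
  obtain ⟨⟨hγ0, -⟩, s, hs, hab⟩ := hγ
  have hD : (0 : ℝ) < s * dotZ γ γ := by exact_mod_cast mul_pos (by omega) (dotZ_self_pos hγ0)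
  refine ⟨-(pairZ (cross γ b) x / pairZ γ x).im / (s * dotZ γ γ),
    (pairZ (cross γ a) x / pairZ γ x).im / (s * dotZ γ γ),
    div_neg_of_neg_of_pos (neg_neg_of_pos hσb) hD, div_pos hσa hD, fun δ ↦ ?_⟩
  have hcof := congrArg (pairZ · x) (cross_cofactor a b γ δ)
  simp only [hab, cross_swap γ b, dotZ_smul_left, pairZ_add, pairZ_smul, pairZ_neg] at hcof
  have hdiv : ((s * dotZ γ γ : ℤ) : ℂ) * (pairZ δ x / pairZ γ x) =
      -(dotZ δ a : ℂ) * (pairZ (cross γ b) x / pairZ γ x) +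
        (dotZ δ b : ℂ) * (pairZ (cross γ a) x / pairZ γ x) + ((dotZ δ γ * s : ℤ) : ℂ) := by
    field_simp
    push_cast at hcof ⊢
    linear_combination hcof
  have him := congrArg im hdiv
  simp only [add_im, mul_im, neg_re, neg_im, intCast_re, intCast_im] at him
  push_cast at him
  rw [← mul_div_assoc, ← mul_div_assoc, ← add_div, eq_div_iff hD.ne']
  linarith

/-- Stated for any `L = ℤγ` so that it applies verbatim to the reversed wedge `(b, a, -γ)`,
whose lattice `ℤ(-γ)` equals, but is not syntactically, `ℤγ`. -/
theorem summable_norm_cexp_out (hγ : IsDirVec a b γ) (ha : a ≠ 0) (hb : b ≠ 0)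
    {x : Fin 3 → ℂ} (hxa : x ∈ UPlus a) (hxb : x ∈ UPlus b)
    (L : AddSubgroup V) (hL : L = AddSubgroup.zmultiples γ) :
    Summable fun q : (QuotientAddGroup.mk '' Cpm a b : Set (V ⧸ L)) ↦
      ‖cexp (-(2 * π * I) * pairZ (q : V ⧸ L).out x / pairZ γ x)‖ := by
  subst hL
  obtain ⟨t, u, ht, hu, him⟩ := hγ.exists_im_pairZ_div_eq ha hb hxa hxb
  set e := fun q : (QuotientAddGroup.mk '' Cpm a b : Set (V ⧸ AddSubgroup.zmultiples γ)) ↦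
    (dotZ (q : V ⧸ AddSubgroup.zmultiples γ).out a, dotZ (q : V ⧸ AddSubgroup.zmultiples γ).out b)
  have he : Function.Injective e := fun q q' h ↦ Subtype.ext <| by
    simpa only [QuotientAddGroup.out_eq'] using
      hγ.mk_eq_of_dotZ_eq (congrArg Prod.fst h) (congrArg Prod.snd h)
  have hquad (q) : 0 ≤ (e q).1 ∧ (e q).2 ≤ 0 := by
    have hq := QuotientAddGroup.out_mem_of_mem_image hγ.add_mem_Cpm q.2
    exact ⟨hq.1.le, hq.2⟩
  refine (summable_exp_of_injective_quadrant he hquad (t := 2 * π * t) (u := 2 * π * u)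
    (by nlinarith [pi_pos]) (by positivity)).congr fun q ↦ ?_
  have hre (z : ℂ) : (-(2 * π * I) * z).re = 2 * π * z.im := by simp [mul_re]
  rw [norm_exp, mul_div_assoc, hre, him]
  simp only [e]
  ring_nf

end IsDirVec

section GammaFactor

variable {ι : Type*} {γ : V} {x : Fin 3 → ℂ} {δ : ι → V}

lemma gammaFacP_eq_one_sub_mul (γ : V) (x : Fin 3 → ℂ) (w : ℂ) (δ : V) :
    gammaFacP γ x w δ =
      1 - cexp (-(2 * π * I) * pairZ δ x / pairZ γ x) * cexp (2 * π * I * w / pairZ γ x) := by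
  rw [gammaFacP, ← Complex.exp_add]
  ring_nf

lemma gammaFacP_eq_zero_iff (hγx : pairZ γ x ≠ 0) (w : ℂ) (δ : V) :
    gammaFacP γ x w δ = 0 ↔ ∃ n : ℤ, w = pairZ δ x + n * pairZ γ x := by
  rw [gammaFacP, sub_eq_zero, eq_comm, Complex.exp_eq_one_iff]
  refine exists_congr fun n ↦ ⟨fun h ↦ ?_, fun h ↦ ?_⟩
  · rw [div_eq_iff hγx] at h
    have := mul_left_cancel₀ two_pi_I_ne_zero
      (by linear_combination h : 2 * π * I * (w - pairZ δ x) = 2 * π * I * (n * pairZ γ x))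
    linear_combination this
  · rw [h]
    field_simp
    ring

lemma multipliable_gammaFacP
    (hK : Summable fun i ↦ ‖cexp (-(2 * π * I) * pairZ (δ i) x / pairZ γ x)‖) (w : ℂ) :
    Multipliable fun i ↦ gammaFacP γ x w (δ i) := by
  simp_rw [gammaFacP_eq_one_sub_mul]
  exact multipliable_one_sub (by simpa only [norm_mul] using hK.mul_right _)

lemma differentiable_tprod_gammaFacP
    (hK : Summable fun i ↦ ‖cexp (-(2 * π * I) * pairZ (δ i) x / pairZ γ x)‖) :
    Differentiable ℂ fun w ↦ ∏' i, gammaFacP γ x w (δ i) := by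
  simp_rw [gammaFacP_eq_one_sub_mul]
  exact (differentiable_tprod_one_sub_mul hK).comp (by fun_prop)

lemma tprod_gammaFacP_eq_zero_iff
    (hK : Summable fun i ↦ ‖cexp (-(2 * π * I) * pairZ (δ i) x / pairZ γ x)‖)
    (hγx : pairZ γ x ≠ 0) (w : ℂ) :
    ∏' i, gammaFacP γ x w (δ i) = 0 ↔ ∃ i, ∃ n : ℤ, w = pairZ (δ i) x + n * pairZ γ x := by
  simp_rw [← gammaFacP_eq_zero_iff hγx, gammaFacP_eq_one_sub_mul, sub_eq_zero,
    eq_comm (a := (1 : ℂ))]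
  exact tprod_one_sub_eq_zero_iff (by simpa only [norm_mul] using hK.mul_right _)

end GammaFactor

lemma Cmp_eq_Cpm_swap (a b : V) : Cmp a b = Cpm b a := by
  ext δ; exact and_comm

lemma gammaFacM_eq_gammaFacP_neg (γ : V) (x : Fin 3 → ℂ) (w : ℂ) (δ : V) :
    gammaFacM γ x w δ = gammaFacP (-γ) x w δ := by
  simp only [gammaFacM, gammaFacP, pairZ_neg, neg_mul, div_neg, neg_div, neg_neg]

theorem statement3_general (a b γ : V) (ha : Primitive a) (hb : Primitive b)
    (hγ : IsDirVec a b γ)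
    (x : Fin 3 → ℂ) (hx : x ∈ UPlus a ∩ UPlus b) :
    pairZ γ x ≠ 0 ∧
    (∀ w : ℂ,
      Multipliable
        (fun q : (QuotientAddGroup.mk '' Cpm a b : Set (V ⧸ AddSubgroup.zmultiples γ)) =>
          gammaFacP γ x w (Quotient.out (q : V ⧸ AddSubgroup.zmultiples γ))) ∧
      Multipliable
        (fun q : (QuotientAddGroup.mk '' Cmp a b : Set (V ⧸ AddSubgroup.zmultiples γ)) =>
          gammaFacM γ x w (Quotient.out (q : V ⧸ AddSubgroup.zmultiples γ)))) ∧
    Differentiable ℂ (fun w : ℂ =>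
      ∏' q : (QuotientAddGroup.mk '' Cpm a b : Set (V ⧸ AddSubgroup.zmultiples γ)),
        gammaFacP γ x w (Quotient.out (q : V ⧸ AddSubgroup.zmultiples γ))) ∧
    Differentiable ℂ (fun w : ℂ =>
      ∏' q : (QuotientAddGroup.mk '' Cmp a b : Set (V ⧸ AddSubgroup.zmultiples γ)),
        gammaFacM γ x w (Quotient.out (q : V ⧸ AddSubgroup.zmultiples γ))) ∧
    (∀ w : ℂ,
      ((∏' q : (QuotientAddGroup.mk '' Cpm a b : Set (V ⧸ AddSubgroup.zmultiples γ)),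
          gammaFacP γ x w (Quotient.out (q : V ⧸ AddSubgroup.zmultiples γ))) = 0 ↔
        ∃ δ ∈ Cpm a b, ∃ n : ℤ, w = pairZ δ x + (n : ℂ) * pairZ γ x)) ∧
    (∀ w : ℂ,
      ((∏' q : (QuotientAddGroup.mk '' Cmp a b : Set (V ⧸ AddSubgroup.zmultiples γ)),
          gammaFacM γ x w (Quotient.out (q : V ⧸ AddSubgroup.zmultiples γ))) = 0 ↔
        ∃ δ ∈ Cmp a b, ∃ n : ℤ, w = pairZ δ x + (n : ℂ) * pairZ γ x)) := by
  obtain ⟨hxa, hxb⟩ := hx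
  have hγx := hγ.pairZ_ne_zero ha.1 hxa
  have hKP := hγ.summable_norm_cexp_out ha.1 hb.1 hxa hxb _ rfl
  have hKM := hγ.swap.summable_norm_cexp_out hb.1 ha.1 hxb hxa _ AddSubgroup.zmultiples_neg.symm
  rw [Cmp_eq_Cpm_swap]
  simp only [gammaFacM_eq_gammaFacP_neg]
  refine ⟨hγx, fun w ↦ ⟨multipliable_gammaFacP hKP w, multipliable_gammaFacP hKM w⟩,
    differentiable_tprod_gammaFacP hKP, differentiable_tprod_gammaFacP hKM, fun w ↦ ?_, fun w ↦ ?_⟩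
  · rw [tprod_gammaFacP_eq_zero_iff hKP hγx, exists_out_eq_add_iff hγ.add_mem_Cpm]
  · rw [tprod_gammaFacP_eq_zero_iff hKM (by rwa [pairZ_neg, neg_ne_zero])]
    simp only [pairZ_neg, exists_eq_add_int_mul_neg_iff]
    have hsat := hγ.swap.add_mem_Cpm
    rw [AddSubgroup.zmultiples_neg] at hsat
    exact exists_out_eq_add_iff hsat x w

/-- convergence, holomorphy in `w`, and zero sets of the two infinite
products (over `C₊₋(a,b)/ℤγ` and `C₋₊(a,b)/ℤγ`) defining `Γ_{a,b}`. -/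
theorem statement3 (a b γ : V) (ha : Primitive a) (hb : Primitive b)
    (hab : LinearIndependent ℚ ![toQ a, toQ b]) (hγ : IsDirVec a b γ)
    (x : Fin 3 → ℂ) (hx : x ∈ UPlus a ∩ UPlus b) :
    pairZ γ x ≠ 0 ∧
    (∀ w : ℂ,
      Multipliable
        (fun q : (QuotientAddGroup.mk '' Cpm a b : Set (V ⧸ AddSubgroup.zmultiples γ)) =>
          gammaFacP γ x w (Quotient.out (q : V ⧸ AddSubgroup.zmultiples γ))) ∧
      Multipliable
        (fun q : (QuotientAddGroup.mk '' Cmp a b : Set (V ⧸ AddSubgroup.zmultiples γ)) =>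
          gammaFacM γ x w (Quotient.out (q : V ⧸ AddSubgroup.zmultiples γ)))) ∧
    Differentiable ℂ (fun w : ℂ =>
      ∏' q : (QuotientAddGroup.mk '' Cpm a b : Set (V ⧸ AddSubgroup.zmultiples γ)),
        gammaFacP γ x w (Quotient.out (q : V ⧸ AddSubgroup.zmultiples γ))) ∧
    Differentiable ℂ (fun w : ℂ =>
      ∏' q : (QuotientAddGroup.mk '' Cmp a b : Set (V ⧸ AddSubgroup.zmultiples γ)),
        gammaFacM γ x w (Quotient.out (q : V ⧸ AddSubgroup.zmultiples γ))) ∧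
    (∀ w : ℂ,
      ((∏' q : (QuotientAddGroup.mk '' Cpm a b : Set (V ⧸ AddSubgroup.zmultiples γ)),
          gammaFacP γ x w (Quotient.out (q : V ⧸ AddSubgroup.zmultiples γ))) = 0 ↔
        ∃ δ ∈ Cpm a b, ∃ n : ℤ, w = pairZ δ x + (n : ℂ) * pairZ γ x)) ∧
    (∀ w : ℂ,
      ((∏' q : (QuotientAddGroup.mk '' Cmp a b : Set (V ⧸ AddSubgroup.zmultiples γ)),
          gammaFacM γ x w (Quotient.out (q : V ⧸ AddSubgroup.zmultiples γ))) = 0 ↔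
        ∃ δ ∈ Cmp a b, ∃ n : ℤ, w = pairZ δ x + (n : ℂ) * pairZ γ x)) :=
  statement3_general a b γ ha hb hγ x hx

end EGG
end

section
/- Let n ≥ 1 and let z₁,…,zₙ, w₁,…,wₙ ∈ ℂ with wⱼ ≠ 0 for all j and Im(wᵢ·conj(wⱼ)) ≠ 0 for all i ≠ j. Then Im((z₁⋯zₙ)/(w₁⋯wₙ)) = Σ_{j=1}^{n} ( ∏_{i=1}^{n} Im(zᵢ/wⱼ) ) / ( ∏_{i≠j} Im(wᵢ/wⱼ) ). -/
/-! Put `t j = w j / conj (w j)`; these nodes are distinct because `Im (w i * conj (w j)) ≠ 0`.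
The polynomial `∏ i, (z i - conj (z i) * X) - conj (∏ z / ∏ w) * ∏ i, (w i - conj (w i) * X)`
has degree `< n` (the leading coefficients cancel), so it equals its Lagrange interpolant on the
nodes `t j`, where the second product vanishes. Evaluating at `X = 0` expresses
`∏ z / ∏ w - conj (∏ z / ∏ w) = 2 i Im (∏ z / ∏ w)` as a sum over `j`, and every factor
`z i - conj (z i) * t j` equals `2 i w j Im (z i / w j)`. -/

open Finset ComplexConjugate

namespace Polynomial

variable {K ι : Type*} [Field K]

theorem natDegree_C_sub_C_mul_X_le (a b : K) : (C a - C b * X).natDegree ≤ 1 :=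
  (natDegree_sub_le _ _).trans (max_le (by simp) ((natDegree_C_mul_le _ _).trans (by simp)))

theorem natDegree_prod_C_sub_C_mul_X_le (s : Finset ι) (a b : ι → K) :
    (∏ i ∈ s, (C (a i) - C (b i) * X)).natDegree ≤ #s := by
  refine (natDegree_prod_le _ _).trans ?_
  simpa using Finset.sum_le_card_nsmul s _ 1 fun i _ => natDegree_C_sub_C_mul_X_le (a i) (b i)

theorem coeff_prod_C_sub_C_mul_X_card (s : Finset ι) (a b : ι → K) :
    (∏ i ∈ s, (C (a i) - C (b i) * X)).coeff #s = ∏ i ∈ s, -b i := by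
  simpa [coeff_C, coeff_X] using
    coeff_prod_of_natDegree_le s _ 1 fun i _ => natDegree_C_sub_C_mul_X_le (a i) (b i)

theorem degree_prod_C_sub_C_mul_X_sub_C_mul_prod_lt (s : Finset ι) (a b c d : ι → K)
    (hd : ∀ i ∈ s, d i ≠ 0) :
    (∏ i ∈ s, (C (a i) - C (b i) * X) -
      C ((∏ i ∈ s, b i) / ∏ i ∈ s, d i) * ∏ i ∈ s, (C (c i) - C (d i) * X)).degree < #s := by
  rw [degree_lt_iff_coeff_zero]
  intro m hm
  rcases hm.eq_or_lt with rfl | hm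
  · have hd' : ∏ i ∈ s, d i ≠ 0 := prod_ne_zero_iff.mpr hd
    rw [coeff_sub, coeff_C_mul, coeff_prod_C_sub_C_mul_X_card, coeff_prod_C_sub_C_mul_X_card,
      prod_neg, prod_neg]
    field_simp
    ring
  · refine coeff_eq_zero_of_natDegree_lt (hm.trans_le' ?_)
    refine (natDegree_sub_le _ _).trans (max_le (natDegree_prod_C_sub_C_mul_X_le _ _ _) ?_)
    exact (natDegree_C_mul_le _ _).trans (natDegree_prod_C_sub_C_mul_X_le _ _ _)

end Polynomial

open Polynomial in
theorem Lagrange.eval_eq_sum_mul_prod_div {F ι : Type*} [Field F] [DecidableEq ι]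
    {s : Finset ι} {v : ι → F} (hvs : Set.InjOn v s) {f : F[X]} (hf : f.degree < #s) (x : F) :
    f.eval x = ∑ i ∈ s, f.eval (v i) * ∏ j ∈ s.erase i, (x - v j) / (v i - v j) := by
  conv_lhs => rw [Lagrange.eq_interpolate hvs hf]
  simp only [Lagrange.interpolate_apply, eval_finsetSum, eval_mul, eval_C, Lagrange.basis,
    eval_prod, Lagrange.basisDivisor, eval_sub, eval_X, div_eq_inv_mul]

open Polynomial in
theorem prod_div_prod_sub_prod_div_prod_eq_sum {K ι : Type*} [Field K] [Fintype ι]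
    [DecidableEq ι] (a b c d : ι → K) (hc : ∀ i, c i ≠ 0) (hd : ∀ i, d i ≠ 0)
    (ht : Function.Injective fun j => c j / d j) :
    (∏ i, a i) / (∏ i, c i) - (∏ i, b i) / (∏ i, d i) =
      ∑ j, (∏ i, (a i - b i * (c j / d j))) /
        (c j * ∏ i ∈ univ.erase j, (c i - d i * (c j / d j))) := by
  set t : ι → K := fun j => c j / d j
  have hlagrange := Lagrange.eval_eq_sum_mul_prod_div ht.injOn
    (degree_prod_C_sub_C_mul_X_sub_C_mul_prod_lt univ a b c d fun i _ => hd i) 0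
  have hroot (j : ι) : (∏ i, (C (c i) - C (d i) * X)).eval (t j) = 0 := by
    rw [eval_prod]
    exact prod_eq_zero (mem_univ j) (by simp [t, mul_div_cancel₀ _ (hd j)])
  have hnode (j k : ι) : (0 - t k) / (t j - t k) = c k / (c k - d k * t j) := by
    rw [← mul_div_mul_left _ _ (neg_ne_zero.mpr (hd k))]
    have := hd j
    have := hd k
    congr 1 <;> simp only [t] <;> field_simp <;> ring
  simp only [eval_sub, eval_mul, hroot, mul_zero, sub_zero, eval_C, eval_prod, eval_X,
    hnode] at hlagrange
  rw [div_sub' (prod_ne_zero_iff.mpr fun i _ => hc i), mul_comm (∏ i, c i), hlagrange, sum_div]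
  refine sum_congr rfl fun j _ => ?_
  rw [prod_div_distrib, ← mul_prod_erase univ c (mem_univ j)]
  have hc' : ∏ i ∈ univ.erase j, c i ≠ 0 := prod_ne_zero_iff.mpr fun i _ => hc i
  have hcancel (p e : K) :
      p * ((∏ i ∈ univ.erase j, c i) / e) / (c j * ∏ i ∈ univ.erase j, c i) = p / (c j * e) := by
    field_simp
  exact hcancel _ _

theorem prod_mul_div_mul_prod_erase_mul {K ι : Type*} [Field K] [DecidableEq ι] {s : Finset ι}
    {j : ι} (hj : j ∈ s) {κ : K} (hκ : κ ≠ 0) (y : K) (x u : ι → K) :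
    (∏ i ∈ s, κ * x i) / (y * ∏ i ∈ s.erase j, κ * u i) =
      κ / y * ((∏ i ∈ s, x i) / ∏ i ∈ s.erase j, u i) := by
  rw [prod_mul_distrib, prod_mul_distrib, prod_const, prod_const, ← card_erase_add_one hj,
    pow_succ]
  field_simp

namespace Complex

theorem sub_conj_mul_div_conj (u : ℂ) {v : ℂ} (hv : v ≠ 0) :
    u - conj u * (v / conj v) = 2 * I * v * (u / v).im := by
  have hv' : conj v ≠ 0 := (map_ne_zero _).mpr hv
  rw [im_eq_sub_conj, map_div₀]
  field_simp

theorem div_conj_injective {ι : Type*} {w : ι → ℂ} (hw0 : ∀ j, w j ≠ 0)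
    (hw : ∀ i j, i ≠ j → (w i * conj (w j)).im ≠ 0) :
    Function.Injective fun j => w j / conj (w j) := by
  intro i j hij
  by_contra hne
  refine hw i j hne (conj_eq_iff_im.mp ?_)
  have := (div_eq_div_iff ((map_ne_zero _).mpr (hw0 i)) ((map_ne_zero _).mpr (hw0 j))).mp hij
  simp only [map_mul, conj_conj]
  linear_combination -this

end Complex

namespace EGG

theorem statement9_general (n : ℕ) (z w : Fin n → ℂ)
    (hw0 : ∀ j, w j ≠ 0)
    (hw : ∀ i j, i ≠ j → (w i * (starRingEnd ℂ) (w j)).im ≠ 0) :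
    ((∏ i, z i) / ∏ i, w i).im =
      ∑ j, (∏ i, (z i / w j).im) / ∏ i ∈ Finset.univ.erase j, (w i / w j).im := by
  have key := prod_div_prod_sub_prod_div_prod_eq_sum z (conj ∘ z) w (conj ∘ w) hw0
    (fun j => (map_ne_zero _).mpr (hw0 j)) (Complex.div_conj_injective hw0 hw)
  simp only [Function.comp_apply, ← map_prod, ← map_div₀,
    Complex.sub_conj_mul_div_conj _ (hw0 _)] at key
  apply Complex.ofReal_injective
  push_cast
  rw [Complex.im_eq_sub_conj, key, sum_div]
  refine sum_congr rfl fun j _ => ?_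
  have h2I : (2 * Complex.I : ℂ) ≠ 0 := by simp
  rw [prod_mul_div_mul_prod_erase_mul (mem_univ j) (mul_ne_zero h2I (hw0 j))]
  field_simp [hw0 j]

/-- the residue identity
`Im(z₁⋯zₙ/w₁⋯wₙ) = Σⱼ (Πᵢ Im(zᵢ/wⱼ)) / (Π_{i≠j} Im(wᵢ/wⱼ))`. -/
theorem statement9 (n : ℕ) (hn : 1 ≤ n) (z w : Fin n → ℂ)
    (hw0 : ∀ j, w j ≠ 0)
    (hw : ∀ i j, i ≠ j → (w i * (starRingEnd ℂ) (w j)).im ≠ 0) :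
    ((∏ i, z i) / ∏ i, w i).im =
      ∑ j, (∏ i, (z i / w j).im) / ∏ i ∈ Finset.univ.erase j, (w i / w j).im :=
  statement9_general n z w hw0 hw

end EGG
end

section
/- For every integer n ≥ 1 and all real numbers ζ, t, s with t ≠ 0 and s ≠ 0: R₃(ζ,t,s) = Σ_{j=0}^{n−1} R₃(ζ + j·t, n·t, s). Equivalently, the function h₃(z,τ,σ) := exp(−(2π/3)·R₃(Im z, Im τ, Im σ)) satisfies h₃(z,τ,σ) = ∏_{j=0}^{n−1} h₃(z+jτ, nτ, σ) whenever Im τ ≠ 0 and Im σ ≠ 0. -/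
namespace EGG

lemma sum_id (n : ℕ) : ∑ j ∈ Finset.range n, (j : ℝ) = n * (n - 1) / 2 := by
  induction n with
  | zero => simp
  | succ n ih => rw [Finset.sum_range_succ, ih]; push_cast; ring

lemma sum_sq (n : ℕ) : ∑ j ∈ Finset.range n, (j : ℝ) ^ 2 = n * (n - 1) * (2 * n - 1) / 6 := by
  induction n with
  | zero => simp
  | succ n ih => rw [Finset.sum_range_succ, ih]; push_cast; ring

lemma sum_cube (n : ℕ) : ∑ j ∈ Finset.range n, (j : ℝ) ^ 3 = n ^ 2 * (n - 1) ^ 2 / 4 := by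
  induction n with
  | zero => simp
  | succ n ih => rw [Finset.sum_range_succ, ih]; push_cast; ring

set_option maxHeartbeats 2000000 in
/-- the distribution relation for `R₃`, and its exponentiated form for `h₃`. -/
theorem statement10 (n : ℕ) (hn : 1 ≤ n) :
    (∀ ζ t s : ℝ, t ≠ 0 → s ≠ 0 →
      R3 ζ t s = ∑ j ∈ Finset.range n, R3 (ζ + (j : ℝ) * t) ((n : ℝ) * t) s) ∧
    (∀ z τ σ : ℂ, τ.im ≠ 0 → σ.im ≠ 0 →
      h3 z τ σ = ∏ j ∈ Finset.range n, h3 (z + (j : ℂ) * τ) ((n : ℂ) * τ) σ) := by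
  have hn0 : (n : ℝ) ≠ 0 := Nat.cast_ne_zero.mpr (by omega)
  have part1 : ∀ ζ t s : ℝ, t ≠ 0 → s ≠ 0 →
      R3 ζ t s = ∑ j ∈ Finset.range n, R3 (ζ + (j : ℝ) * t) ((n : ℝ) * t) s := by
    intro ζ t s ht hs
    have key : ∀ j : ℕ, R3 (ζ + (j : ℝ) * t) ((n : ℝ) * t) s =
        (t ^ 2 / ((n : ℝ) * s)) * (j : ℝ) ^ 3
        + (3 * ζ * t / ((n : ℝ) * s) - 3 * t / (2 * (n : ℝ)) - 3 * t ^ 2 / (2 * s)) * (j : ℝ) ^ 2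
        + (3 * ζ ^ 2 / ((n : ℝ) * s) - 3 * ζ / (n : ℝ) - 3 * ζ * t / s
            + (n : ℝ) * t ^ 2 / (2 * s) + s / (2 * (n : ℝ)) + 3 * t / 2) * (j : ℝ)
        + R3 ζ ((n : ℝ) * t) s := by
      intro j
      unfold R3
      field_simp
      ring
    rw [Finset.sum_congr rfl (fun j _ => key j)]
    simp only [Finset.sum_add_distrib, ← Finset.mul_sum, Finset.sum_const,
      Finset.card_range, nsmul_eq_mul]
    rw [sum_id, sum_sq, sum_cube]
    unfold R3
    field_simp
    ring
  refine ⟨part1, ?_⟩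
  intro z τ σ hτ hσ
  have him : ∀ j : ℕ, (z + (j : ℂ) * τ).im = z.im + (j : ℝ) * τ.im := by
    intro j; simp [Complex.add_im, Complex.mul_im]
  have hnτ : ((n : ℂ) * τ).im = (n : ℝ) * τ.im := by
    simp [Complex.mul_im]
  unfold h3
  rw [← Real.exp_sum]
  congr 1
  rw [← Finset.mul_sum]
  congr 1
  simp only [him, hnτ]
  exact part1 z.im τ.im σ.im hτ hσ

end EGG
end
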